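/- arXiv:2408.07268 — 8 statements merged into one kernel-verified Lean document; each statement's English description precedes it below -/
import Mathlib

section
/- Let N ≥ 1 and v_1, …, v_N ∈ ℝ^d with average v̄ = (1/N)∑_{i=1}^N v_i. Suppose there exist constants β₁, β₂ ≥ 0 such that ‖v_i‖² ≤ β₁‖v̄‖² + β₂ for every i ∈ {1,…,N}. Then for every nonempty subset X ⊆ {1,…,N}, the subsample average g = (1/|X|)∑_{i∈X} v_i satisfies ‖g − v̄‖² ≤ 4((N − |X|)/N)² (β₁‖v̄‖² + β₂). -/
open Finset
open scoped RealInnerProductSpace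

noncomputable section

abbrev Vec (d : ℕ) := EuclideanSpace ℝ (Fin d)

private lemma aux_field (s n r : ℝ) (hs : s ≠ 0) (hn : n ≠ 0) :
    (s⁻¹ - n⁻¹) * (s * r) + n⁻¹ * ((n - s) * r) = 2 * ((n - s) / n) * r := by
  field_simp
  ring

/-- Deterministic subsampling error bound: if the component vectors are
bounded relative to their average, then any nonempty subsample average is close to the
full average. -/
theorem deterministic_subsampling_bound {d N : ℕ} (hN : 1 ≤ N)
    (v : Fin N → Vec d) (β₁ β₂ : ℝ) (hβ₁ : 0 ≤ β₁) (hβ₂ : 0 ≤ β₂)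
    (vbar : Vec d) (hvbar : vbar = (N : ℝ)⁻¹ • ∑ i, v i)
    (hbound : ∀ i, ‖v i‖ ^ 2 ≤ β₁ * ‖vbar‖ ^ 2 + β₂)
    (X : Finset (Fin N)) (hX : X.Nonempty)
    (g : Vec d) (hg : g = (X.card : ℝ)⁻¹ • ∑ i ∈ X, v i) :
    ‖g - vbar‖ ^ 2 ≤ 4 * (((N : ℝ) - X.card) / N) ^ 2 * (β₁ * ‖vbar‖ ^ 2 + β₂) := by
  set B := β₁ * ‖vbar‖ ^ 2 + β₂ with hBdef
  have hB0 : 0 ≤ B := by positivity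
  have hsq : Real.sqrt B ^ 2 = B := Real.sq_sqrt hB0
  have hv : ∀ i, ‖v i‖ ≤ Real.sqrt B := by
    intro i
    have h := hbound i
    nlinarith [norm_nonneg (v i), Real.sqrt_nonneg B,
      sq_nonneg (‖v i‖ - Real.sqrt B)]
  have hN0 : (0:ℝ) < N := by exact_mod_cast hN
  have hs0 : (0:ℝ) < X.card := by exact_mod_cast hX.card_pos
  have hsNnat : X.card ≤ N := by simpa using X.card_le_univ
  have hsN : (X.card : ℝ) ≤ N := by exact_mod_cast hsNnat
  have hcompl : ((Xᶜ.card : ℝ)) = (N : ℝ) - X.card := by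
    rw [Finset.card_compl]
    simp [Nat.cast_sub hsNnat]
  have key : g - vbar = ((X.card:ℝ)⁻¹ - (N:ℝ)⁻¹) • ∑ i ∈ X, v i
      - (N:ℝ)⁻¹ • ∑ i ∈ Xᶜ, v i := by
    rw [hg, hvbar, ← Finset.sum_add_sum_compl X v, sub_smul, smul_add]
    abel
  have h1 : ‖∑ i ∈ X, v i‖ ≤ X.card * Real.sqrt B := by
    refine (norm_sum_le _ _).trans ?_
    calc ∑ i ∈ X, ‖v i‖ ≤ ∑ _i ∈ X, Real.sqrt B :=
          Finset.sum_le_sum fun i _ => hv i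
      _ = X.card * Real.sqrt B := by simp [mul_comm]
  have h2 : ‖∑ i ∈ Xᶜ, v i‖ ≤ ((N:ℝ) - X.card) * Real.sqrt B := by
    refine (norm_sum_le _ _).trans ?_
    calc ∑ i ∈ Xᶜ, ‖v i‖ ≤ ∑ _i ∈ Xᶜ, Real.sqrt B :=
          Finset.sum_le_sum fun i _ => hv i
      _ = ((N:ℝ) - X.card) * Real.sqrt B := by simp [mul_comm, hcompl]
  have hc0 : 0 ≤ (X.card:ℝ)⁻¹ - (N:ℝ)⁻¹ :=
    sub_nonneg.mpr (inv_anti₀ hs0 hsN)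
  have hnorm : ‖g - vbar‖ ≤ 2 * (((N:ℝ) - X.card) / N) * Real.sqrt B := by
    rw [key]
    refine (norm_sub_le _ _).trans ?_
    rw [norm_smul, norm_smul]
    have e1 : ‖((X.card:ℝ)⁻¹ - (N:ℝ)⁻¹)‖ = (X.card:ℝ)⁻¹ - (N:ℝ)⁻¹ :=
      Real.norm_of_nonneg hc0
    have e2 : ‖(N:ℝ)⁻¹‖ = (N:ℝ)⁻¹ := Real.norm_of_nonneg (by positivity)
    rw [e1, e2]
    have t1 : ((X.card:ℝ)⁻¹ - (N:ℝ)⁻¹) * ‖∑ i ∈ X, v i‖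
        ≤ ((X.card:ℝ)⁻¹ - (N:ℝ)⁻¹) * (X.card * Real.sqrt B) :=
      mul_le_mul_of_nonneg_left h1 hc0
    have t2 : (N:ℝ)⁻¹ * ‖∑ i ∈ Xᶜ, v i‖
        ≤ (N:ℝ)⁻¹ * (((N:ℝ) - X.card) * Real.sqrt B) :=
      mul_le_mul_of_nonneg_left h2 (by positivity)
    have heq : ((X.card:ℝ)⁻¹ - (N:ℝ)⁻¹) * (X.card * Real.sqrt B)
        + (N:ℝ)⁻¹ * (((N:ℝ) - X.card) * Real.sqrt B)
        = 2 * (((N:ℝ) - X.card) / N) * Real.sqrt B :=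
      aux_field _ _ _ hs0.ne' hN0.ne'
    linarith
  have hng : 0 ≤ ‖g - vbar‖ := norm_nonneg _
  have hr : 0 ≤ ((N:ℝ) - X.card) / N := by
    apply div_nonneg (by linarith) (le_of_lt hN0)
  nlinarith [Real.sqrt_nonneg B, sq_nonneg (((N:ℝ) - X.card) / N * Real.sqrt B)]
end
end

section
/- Let f(w) = (1/N)∑_{i=1}^N F_i(w) with each F_i : ℝ^d → ℝ continuously differentiable, and suppose there exist constants β₁ g, β₂ g ≥ 0 such that ‖∇F_i(w)‖² ≤ β₁ g ‖∇f(w)‖² + β₂ g for all i and all w ∈ ℝ^d. Fix w ∈ ℝ^d, a symmetric positive definite d×d matrix A with largest eigenvalue λ_max(A), θ ∈ [0,1] and ι > 0. If X ⊆ {1,…,N} is nonempty with |X| ≥ N·(1 − √((θ²‖∇f(w)‖_A² + ι)/(4 λ_max(A)(β₁ g ‖∇f(w)‖² + β₂ g)))), then the subsampled gradient g = (1/|X|)∑_{i∈X}∇F_i(w) satisfies the deterministic norm condition ‖g − ∇f(w)‖_A² ≤ θ²‖∇f(w)‖_A² + ι. -/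
open Finset Matrix
open scoped RealInnerProductSpace

noncomputable section

/-- The continuous linear operator on Euclidean space associated with a matrix. -/
noncomputable def toOp {d : ℕ} (A : Matrix (Fin d) (Fin d) ℝ) : Vec d →L[ℝ] Vec d :=
  LinearMap.toContinuousLinearMap (Matrix.toEuclideanLin A)

/-! The gradient of the average is the average of the gradients, so
`g - ∇f(w) = (1/|X| - 1/N) ∑_{i ∈ X} ∇Fᵢ(w) - (1/N) ∑_{i ∉ X} ∇Fᵢ(w)`. Each `‖∇Fᵢ(w)‖` is at most
`r = √(β₁‖∇f(w)‖² + β₂)`, so the triangle inequality gives `‖g - ∇f(w)‖ ≤ 2 (1 - |X|/N) r`.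
Hence `‖g - ∇f(w)‖_A² ≤ 4 λ_max r² (1 - |X|/N)²`, and the sample-size condition says exactly
that this is at most `θ²‖∇f(w)‖_A² + ι`. -/

section Gradient

variable {E : Type*} [NormedAddCommGroup E] [InnerProductSpace ℝ E] [CompleteSpace E]
  {f : E → ℝ} {f' x : E}

theorem HasGradientAt.const_mul (c : ℝ) (hf : HasGradientAt f f' x) :
    HasGradientAt (fun y => c * f y) (c • f') x := by
  rw [hasGradientAt_iff_hasFDerivAt, map_smul]
  exact hf.hasFDerivAt.const_mul c

theorem HasGradientAt.fun_sum {ι : Type*} {u : Finset ι} {F : ι → E → ℝ} {F' : ι → E}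
    (hF : ∀ i ∈ u, HasGradientAt (F i) (F' i) x) :
    HasGradientAt (fun y => ∑ i ∈ u, F i y) (∑ i ∈ u, F' i) x := by
  rw [hasGradientAt_iff_hasFDerivAt, map_sum]
  exact HasFDerivAt.fun_sum fun i hi => (hF i hi).hasFDerivAt

end Gradient

theorem norm_average_sub_average_le_of_subset {ι E : Type*} [SeminormedAddCommGroup E]
    [NormedSpace ℝ E] {s t : Finset ι} {h : ι → E} {r : ℝ} (hst : s ⊆ t) (hs : s.Nonempty)
    (hr : ∀ i ∈ t, ‖h i‖ ≤ r) :
    ‖(#s : ℝ)⁻¹ • ∑ i ∈ s, h i - (#t : ℝ)⁻¹ • ∑ i ∈ t, h i‖ ≤ 2 * (1 - #s / #t) * r := by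
  classical
  have hk : (0 : ℝ) < #s := by exact_mod_cast hs.card_pos
  have hkn : (#s : ℝ) ≤ #t := by exact_mod_cast card_le_card hst
  have hn : (0 : ℝ) < #t := hk.trans_le hkn
  have hcoeff : (0 : ℝ) ≤ (#s : ℝ)⁻¹ - (#t : ℝ)⁻¹ := sub_nonneg.mpr (inv_anti₀ hk hkn)
  have hsum_s : ‖∑ i ∈ s, h i‖ ≤ #s * r := by
    simpa using norm_sum_le_of_le s fun i hi => hr i (hst hi)
  have hsum_rest : ‖∑ i ∈ t \ s, h i‖ ≤ (#t - #s) * r := by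
    simpa [card_sdiff_of_subset hst, Nat.cast_sub (card_le_card hst)] using
      norm_sum_le_of_le (t \ s) fun i hi => hr i (sdiff_subset hi)
  have hsplit : (#s : ℝ)⁻¹ • ∑ i ∈ s, h i - (#t : ℝ)⁻¹ • ∑ i ∈ t, h i =
      ((#s : ℝ)⁻¹ - (#t : ℝ)⁻¹) • ∑ i ∈ s, h i - (#t : ℝ)⁻¹ • ∑ i ∈ t \ s, h i := by
    rw [← sum_sdiff hst, smul_add, sub_smul]
    abel
  calc _ ≤ ((#s : ℝ)⁻¹ - (#t : ℝ)⁻¹) * ‖∑ i ∈ s, h i‖ + (#t : ℝ)⁻¹ * ‖∑ i ∈ t \ s, h i‖ := by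
        rw [hsplit]
        refine (norm_sub_le _ _).trans_eq ?_
        rw [norm_smul, norm_smul, Real.norm_of_nonneg hcoeff, Real.norm_of_nonneg (by positivity)]
    _ ≤ ((#s : ℝ)⁻¹ - (#t : ℝ)⁻¹) * (#s * r) + (#t : ℝ)⁻¹ * ((#t - #s) * r) := by gcongr
    _ = 2 * (1 - #s / #t) * r := by field_simp; ring

theorem mul_sq_le_of_le_sqrt_div {D S t : ℝ} (hS : 0 ≤ S) (ht : 0 ≤ t) (h : t ≤ √(S / D)) :
    D * t ^ 2 ≤ S := by
  rcases le_or_gt D 0 with hD | hD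
  · exact (mul_nonpos_of_nonpos_of_nonneg hD (sq_nonneg t)).trans hS
  · have ht2 : t ^ 2 ≤ S / D := by
      simpa [Real.sq_sqrt (div_nonneg hS hD.le)] using pow_le_pow_left₀ ht h 2
    exact (le_div_iff₀' hD).mp ht2

theorem Matrix.PosSemidef.inner_toOp_self_nonneg {d : ℕ} {A : Matrix (Fin d) (Fin d) ℝ}
    (hA : A.PosSemidef) (v : Vec d) : 0 ≤ ⟪toOp A v, v⟫ :=
  (Matrix.isPositive_toEuclideanLin_iff.mpr hA).re_inner_nonneg_left v

theorem gradient_sample_size_deterministic_norm_condition_general {d N : ℕ}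
    (F : Fin N → Vec d → ℝ) (gradF : Fin N → Vec d → Vec d)
    (f : Vec d → ℝ) (gradf : Vec d → Vec d)
    (hf : ∀ x, f x = (N : ℝ)⁻¹ * ∑ i, F i x)
    (hgradF : ∀ i x, HasGradientAt (F i) (gradF i x) x)
    (hgradf : ∀ x, HasGradientAt f (gradf x) x)
    (β₁ β₂ : ℝ) (hβ₁ : 0 ≤ β₁) (hβ₂ : 0 ≤ β₂)
    (hbound : ∀ i x, ‖gradF i x‖ ^ 2 ≤ β₁ * ‖gradf x‖ ^ 2 + β₂)
    (w : Vec d)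
    (A : Matrix (Fin d) (Fin d) ℝ) (hA : A.PosDef)
    (lmax : ℝ) (hlmax : ∀ v : Vec d, ⟪toOp A v, v⟫ ≤ lmax * ‖v‖ ^ 2)
    (θ ι : ℝ) (hι : 0 < ι)
    (X : Finset (Fin N)) (hX : X.Nonempty)
    (hcard : (N : ℝ) * (1 - Real.sqrt ((θ ^ 2 * ⟪toOp A (gradf w), gradf w⟫ + ι) /
        (4 * lmax * (β₁ * ‖gradf w‖ ^ 2 + β₂)))) ≤ X.card)
    (g : Vec d) (hg : g = (X.card : ℝ)⁻¹ • ∑ i ∈ X, gradF i w) :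
    ⟪toOp A (g - gradf w), g - gradf w⟫ ≤ θ ^ 2 * ⟪toOp A (gradf w), gradf w⟫ + ι := by
  set B := β₁ * ‖gradf w‖ ^ 2 + β₂
  set S := θ ^ 2 * ⟪toOp A (gradf w), gradf w⟫ + ι
  set t := 1 - (X.card : ℝ) / N
  have hG : gradf w = (N : ℝ)⁻¹ • ∑ i, gradF i w := by
    refine (hgradf w).unique ?_
    rw [funext hf]
    exact (HasGradientAt.fun_sum fun i _ => hgradF i w).const_mul (N : ℝ)⁻¹
  have hdev : ‖g - gradf w‖ ≤ 2 * t * √B := by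
    rw [hg, hG]
    simpa only [card_univ, Fintype.card_fin] using
      norm_average_sub_average_le_of_subset (subset_univ X) hX
      fun i _ => (abs_norm (gradF i w)).symm.trans_le (Real.abs_le_sqrt (hbound i w))
  have hS : 0 ≤ S := by
    have := hA.posSemidef.inner_toOp_self_nonneg (gradf w)
    positivity
  have hkN : (X.card : ℝ) ≤ N := by simpa using card_le_univ X
  have ht : 0 ≤ t := sub_nonneg.mpr (div_le_one_of_le₀ hkN (Nat.cast_nonneg N))
  have htS : t ≤ √(S / (4 * lmax * B)) := by
    have hN : (0 : ℝ) < N := (Nat.cast_pos.mpr hX.card_pos).trans_le hkN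
    rw [sub_le_comm, le_div_iff₀ hN]
    linarith
  rcases le_or_gt lmax 0 with hl | hl
  · exact (hlmax _).trans ((mul_nonpos_of_nonpos_of_nonneg hl (sq_nonneg _)).trans hS)
  calc _ ≤ lmax * ‖g - gradf w‖ ^ 2 := hlmax _
    _ ≤ lmax * (2 * t * √B) ^ 2 := by gcongr
    _ = 4 * lmax * B * t ^ 2 := by rw [mul_pow, mul_pow, Real.sq_sqrt (by positivity)]; ring
    _ ≤ S := mul_sq_le_of_le_sqrt_div hS ht htS

/-- Gradient sample size guaranteeing the deterministic norm condition
for the finite-sum problem. -/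
theorem gradient_sample_size_deterministic_norm_condition {d N : ℕ} (hN : 1 ≤ N)
    (F : Fin N → Vec d → ℝ) (gradF : Fin N → Vec d → Vec d)
    (f : Vec d → ℝ) (gradf : Vec d → Vec d)
    (hf : ∀ x, f x = (N : ℝ)⁻¹ * ∑ i, F i x)
    (hFdiff : ∀ i, ContDiff ℝ 1 (F i))
    (hgradF : ∀ i x, HasGradientAt (F i) (gradF i x) x)
    (hgradf : ∀ x, HasGradientAt f (gradf x) x)
    (β₁ β₂ : ℝ) (hβ₁ : 0 ≤ β₁) (hβ₂ : 0 ≤ β₂)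
    (hbound : ∀ i x, ‖gradF i x‖ ^ 2 ≤ β₁ * ‖gradf x‖ ^ 2 + β₂)
    (w : Vec d)
    (A : Matrix (Fin d) (Fin d) ℝ) (hAsym : A.IsSymm) (hA : A.PosDef)
    (lmax : ℝ) (hlmax : ∀ v : Vec d, ⟪toOp A v, v⟫ ≤ lmax * ‖v‖ ^ 2)
    (θ ι : ℝ) (hθ : θ ∈ Set.Icc (0 : ℝ) 1) (hι : 0 < ι)
    (X : Finset (Fin N)) (hX : X.Nonempty)
    (hcard : (N : ℝ) * (1 - Real.sqrt ((θ ^ 2 * ⟪toOp A (gradf w), gradf w⟫ + ι) /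
        (4 * lmax * (β₁ * ‖gradf w‖ ^ 2 + β₂)))) ≤ X.card)
    (g : Vec d) (hg : g = (X.card : ℝ)⁻¹ • ∑ i ∈ X, gradF i w) :
    ⟪toOp A (g - gradf w), g - gradf w⟫ ≤ θ ^ 2 * ⟪toOp A (gradf w), gradf w⟫ + ι :=
  gradient_sample_size_deterministic_norm_condition_general F gradF f gradf hf hgradF hgradf β₁ β₂
    hβ₁ hβ₂ hbound w A hA lmax hlmax θ ι hι X hX hcard g hg
end
end

section
/- Let f : ℝ^d → ℝ be twice continuously differentiable with ∇²f(w) ⪯ L·I for all w ∈ ℝ^d, where 0 < L < ∞. Let H̃ be a symmetric d×d matrix with H̃ ⪰ μ̃·I for some μ̃ > 0, let g ∈ ℝ^d, let 0 < α ≤ μ̃/L, and set w₊ = w − α H̃⁻¹ g and δ = g − ∇f(w). Then f(w₊) ≤ f(w) − (α/2)·∇f(w)ᵀ H̃⁻¹ ∇f(w) + (α/2)·δᵀ H̃⁻¹ δ. -/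
/-!
Along the segment from `w` to `w + v` the function `f` has second derivative at most
`L ‖v‖²`, which gives the quadratic upper bound
`f (w + v) ≤ f w + ⟪∇f w, v⟫ + L/2 ‖v‖²`. Take `v = -α p` with `p = H̃⁻¹ g`. Since
`H̃ p = g`, the curvature bound `H̃ ⪰ μ̃ I` gives `α L ‖p‖² ≤ μ̃ ‖p‖² ≤ ⟪p, g⟫`, so the quadratic
term is at most `(α/2) ⟪p, g⟫`. Expanding `⟪H̃⁻¹ δ, δ⟫` with the symmetry of `H̃⁻¹` turns the
claim into exactly this inequality.
-/

open Finset Matrix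
open scoped RealInnerProductSpace

noncomputable section

theorem le_tangent_add_half_mul_sq_of_hasDerivAt_le {φ φ' φ'' : ℝ → ℝ} {M : ℝ}
    (hφ : ∀ t, HasDerivAt φ (φ' t) t) (hφ' : ∀ t, HasDerivAt φ' (φ'' t) t)
    (hM : ∀ t, φ'' t ≤ M) (x y : ℝ) :
    φ y ≤ φ x + φ' x * (y - x) + M / 2 * (y - x) ^ 2 := by
  set χ : ℝ → ℝ := fun t => φ t - M / 2 * (t - x) ^ 2
  have hχ : ∀ t, HasDerivAt χ (φ' t - M * (t - x)) t := fun t => by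
    refine ((hφ t).sub ((((hasDerivAt_id t).sub_const x).pow 2).const_mul (M / 2))).congr_deriv ?_
    simp only [id]; ring
  have hχ' : ∀ t, HasDerivAt (fun t => φ' t - M * (t - x)) (φ'' t - M) t := fun t =>
    ((hφ' t).sub (((hasDerivAt_id t).sub_const x).const_mul M)).congr_deriv (by ring)
  -- `χ'' = φ'' - M ≤ 0`, so `χ` lies below its tangent line at `x`.
  have hconc : ConcaveOn ℝ Set.univ χ :=
    concaveOn_of_hasDerivWithinAt2_nonpos convex_univ
      (fun t _ => (hχ t).continuousAt.continuousWithinAt)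
      (fun t _ => (hχ t).hasDerivWithinAt) (fun t _ => (hχ' t).hasDerivWithinAt)
      (fun t _ => sub_nonpos.2 (hM t))
  have hχx : HasDerivAt χ (φ' x) x := by simpa using hχ x
  rcases lt_trichotomy x y with hxy | rfl | hyx
  · have := hconc.slope_le_of_hasDerivAt trivial trivial hxy hχx
    rw [slope_def_field, div_le_iff₀ (sub_pos.2 hxy)] at this
    simp only [χ, sub_self] at this
    nlinarith
  · simp
  · have := hconc.le_slope_of_hasDerivAt trivial trivial hyx hχx
    rw [slope_def_field, le_div_iff₀ (sub_pos.2 hyx)] at this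
    simp only [χ, sub_self] at this
    nlinarith

theorem le_add_inner_add_half_mul_sq_of_hessian_le {E : Type*} [NormedAddCommGroup E]
    [InnerProductSpace ℝ E] [CompleteSpace E] {f : E → ℝ} {gradf : E → E}
    {Hf : E → E →L[ℝ] E} {L : ℝ} (hgrad : ∀ x, HasGradientAt f (gradf x) x)
    (hHf : ∀ x, HasFDerivAt gradf (Hf x) x) (hHub : ∀ x v, ⟪Hf x v, v⟫ ≤ L * ‖v‖ ^ 2)
    (w v : E) :
    f (w + v) ≤ f w + ⟪gradf w, v⟫ + L / 2 * ‖v‖ ^ 2 := by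
  have hline : ∀ t : ℝ, HasDerivAt (fun t : ℝ => w + t • v) v t := fun t => by
    simpa using ((hasDerivAt_id t).smul_const v).const_add w
  have hφ : ∀ t : ℝ, HasDerivAt (fun t => f (w + t • v)) ⟪gradf (w + t • v), v⟫ t :=
    fun t => (hgrad _).hasFDerivAt.comp_hasDerivAt t (hline t)
  have hφ' : ∀ t : ℝ, HasDerivAt (fun t => ⟪gradf (w + t • v), v⟫) ⟪Hf (w + t • v) v, v⟫ t :=
    fun t => by
      simpa using ((hHf _).comp_hasDerivAt t (hline t)).inner ℝ (hasDerivAt_const t v)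
  have := le_tangent_add_half_mul_sq_of_hasDerivAt_le hφ hφ' (fun t => hHub _ v) 0 1
  simp only [zero_smul, add_zero, one_smul, sub_zero, mul_one, one_pow] at this
  rwa [mul_div_right_comm] at this

theorem LinearMap.IsSymmetric.inner_map_sub_sub {E : Type*} [NormedAddCommGroup E]
    [InnerProductSpace ℝ E] {T : E →ₗ[ℝ] E} (hT : T.IsSymmetric) (x y : E) :
    ⟪T (x - y), x - y⟫ = ⟪T x, x⟫ - 2 * ⟪T x, y⟫ + ⟪T y, y⟫ := by
  rw [map_sub, inner_sub_left, inner_sub_right, inner_sub_right, hT y x, real_inner_comm (T x) y]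
  ring

theorem isSymmetric_toOp {d : ℕ} {A : Matrix (Fin d) (Fin d) ℝ} (hA : A.IsSymm) :
    (toOp A : Vec d →ₗ[ℝ] Vec d).IsSymmetric := by
  rw [toOp, LinearMap.coe_toContinuousLinearMap, isSymmetric_toEuclideanLin_iff,
    IsHermitian, conjTranspose_eq_transpose_of_trivial]
  exact hA

theorem isUnit_of_le_inner_toOp {d : ℕ} {A : Matrix (Fin d) (Fin d) ℝ} {μ : ℝ} (hμ : 0 < μ)
    (hA : ∀ v : Vec d, μ * ‖v‖ ^ 2 ≤ ⟪toOp A v, v⟫) : IsUnit A := by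
  have hinj : Function.Injective (toOp A) := by
    refine (injective_iff_map_eq_zero _).2 fun v hv => ?_
    have := hA v
    rw [hv, inner_zero_left] at this
    exact norm_eq_zero.1 (pow_eq_zero_iff two_ne_zero |>.1 <|
      le_antisymm (nonpos_of_mul_nonpos_right this hμ) (sq_nonneg _))
  rw [← mulVec_injective_iff_isUnit]
  intro x y hxy
  simpa using @hinj (WithLp.toLp 2 x) (WithLp.toLp 2 y) (by simp [toOp, hxy])

theorem toOp_apply_toOp_inv {d : ℕ} {A : Matrix (Fin d) (Fin d) ℝ} (hA : IsUnit A) (x : Vec d) :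
    toOp A (toOp A⁻¹ x) = x := by
  simp [toOp, toLpLin_apply, mulVec_mulVec, mul_nonsing_inv _ ((isUnit_iff_isUnit_det A).1 hA)]

theorem descent_lemma_inexact_newton_general {d : ℕ}
    (L μt α : ℝ) (hL : 0 < L) (hμt : 0 < μt)
    (f : Vec d → ℝ) (gradf : Vec d → Vec d) (Hf : Vec d → (Vec d →L[ℝ] Vec d))
    (hgrad : ∀ x, HasGradientAt f (gradf x) x)
    (hHf : ∀ x, HasFDerivAt gradf (Hf x) x)
    (hHub : ∀ x (v : Vec d), ⟪Hf x v, v⟫ ≤ L * ‖v‖ ^ 2)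
    (Ht : Matrix (Fin d) (Fin d) ℝ) (hHtsym : Ht.IsSymm)
    (hHtlb : ∀ v : Vec d, μt * ‖v‖ ^ 2 ≤ ⟪toOp Ht v, v⟫)
    (g : Vec d) (hα0 : 0 < α) (hα : α ≤ μt / L) (w : Vec d) :
    f (w - α • toOp Ht⁻¹ g) ≤ f w - (α / 2) * ⟪toOp Ht⁻¹ (gradf w), gradf w⟫
      + (α / 2) * ⟪toOp Ht⁻¹ (g - gradf w), g - gradf w⟫ := by
  set P := toOp Ht⁻¹
  have hcurv : α * L * ‖P g‖ ^ 2 ≤ ⟪P g, g⟫ := by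
    have hαL : α * L ≤ μt := (le_div_iff₀ hL).1 hα
    calc α * L * ‖P g‖ ^ 2 ≤ μt * ‖P g‖ ^ 2 := by gcongr
      _ ≤ ⟪toOp Ht (P g), P g⟫ := hHtlb (P g)
      _ = ⟪P g, g⟫ := by
        rw [toOp_apply_toOp_inv (isUnit_of_le_inner_toOp hμt hHtlb), real_inner_comm]
  have hdesc := le_add_inner_add_half_mul_sq_of_hessian_le hgrad hHf hHub w (-(α • P g))
  rw [← sub_eq_add_neg, inner_neg_right, real_inner_smul_right, norm_neg, norm_smul,
    Real.norm_of_nonneg hα0.le, real_inner_comm] at hdesc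
  have hpolar := (isSymmetric_toOp hHtsym.inv).inner_map_sub_sub g (gradf w)
  simp only [ContinuousLinearMap.coe_coe] at hpolar
  rw [hpolar]
  linarith [mul_le_mul_of_nonneg_left hcurv hα0.le]

/-- One-step descent bound for an inexact Newton-type step with a
positive-definite Hessian approximation. -/
theorem descent_lemma_inexact_newton {d : ℕ}
    (L μt α : ℝ) (hL : 0 < L) (hμt : 0 < μt)
    (f : Vec d → ℝ) (gradf : Vec d → Vec d) (Hf : Vec d → (Vec d →L[ℝ] Vec d))
    (hsmooth : ContDiff ℝ 2 f)
    (hgrad : ∀ x, HasGradientAt f (gradf x) x)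
    (hHf : ∀ x, HasFDerivAt gradf (Hf x) x)
    (hHub : ∀ x (v : Vec d), ⟪Hf x v, v⟫ ≤ L * ‖v‖ ^ 2)
    (Ht : Matrix (Fin d) (Fin d) ℝ) (hHtsym : Ht.IsSymm)
    (hHtlb : ∀ v : Vec d, μt * ‖v‖ ^ 2 ≤ ⟪toOp Ht v, v⟫)
    (g : Vec d) (hα0 : 0 < α) (hα : α ≤ μt / L) (w : Vec d) :
    f (w - α • toOp Ht⁻¹ g) ≤ f w - (α / 2) * ⟪toOp Ht⁻¹ (gradf w), gradf w⟫
      + (α / 2) * ⟪toOp Ht⁻¹ (g - gradf w), g - gradf w⟫ :=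
  descent_lemma_inexact_newton_general L μt α hL hμt f gradf Hf hgrad hHf hHub Ht hHtsym hHtlb g hα0
    hα w
end
end

section
/- Let F₀, …, F_k : ℝ^d → ℝ be twice continuously differentiable with ‖∇²F_i(w)‖ ≤ L for all w and with M-Lipschitz Hessians. Let w₀, …, w_k, w* ∈ ℝ^d, let k_lin ∈ ℕ with k_lin ≤ k + 1, and suppose there are constants ν > 0, μ > 0 and ρ ∈ [0,1) such that ‖w_i − w*‖ ≤ (ν/μ)(√ρ)^{i − k_lin} for all i with k_lin ≤ i ≤ k. Then with uniform weights γ_i = 1/(k+1): ∑_{i=0}^k γ_i ‖(∇²F_i(w_i) − ∇²F_i(w*))(w_k − w*)‖ ≤ (C/(k+1))·‖w_k − w*‖, where C = 2L·k_lin + νM/(μ(1 − √ρ)). -/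
open Finset
open scoped RealInnerProductSpace

noncomputable section

/-!
Split the average at `klin`. Before `klin` each Hessian difference is bounded crudely by
`‖∇²Fᵢ(wᵢ)‖ + ‖∇²Fᵢ(w*)‖ ≤ 2L`; from `klin` on, the Lipschitz bound and the R-linear decay give
`M (ν/μ) (√ρ)^(i - klin)`, whose sum is dominated by the full geometric series `M ν / (μ (1 - √ρ))`.
-/

theorem sum_range_le_of_le_const_of_le_geometric {a : ℕ → ℝ} {m n : ℕ} {c C r : ℝ}
    (hmn : m ≤ n) (hC : 0 ≤ C) (hr0 : 0 ≤ r) (hr1 : r < 1)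
    (hhead : ∀ i < m, a i ≤ c) (htail : ∀ i, m ≤ i → i < n → a i ≤ C * r ^ (i - m)) :
    ∑ i ∈ range n, a i ≤ c * m + C / (1 - r) := by
  rw [← sum_range_add_sum_Ico a hmn]
  have head : ∑ i ∈ range m, a i ≤ c * m := by
    simpa [mul_comm] using sum_le_card_nsmul (range m) a c fun i hi ↦ hhead i (mem_range.1 hi)
  have tail : ∑ i ∈ Ico m n, a i ≤ C / (1 - r) :=
    calc ∑ i ∈ Ico m n, a i
        ≤ ∑ i ∈ Ico m n, C * r ^ (i - m) :=
          sum_le_sum fun i hi ↦ htail i (mem_Ico.1 hi).1 (mem_Ico.1 hi).2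
      _ = C * ∑ j ∈ Ico 0 (n - m), r ^ j := by
          rw [sum_Ico_eq_sum_range, ← range_eq_Ico, mul_sum]
          simp
      _ ≤ C * (r ^ 0 / (1 - r)) := by gcongr; exact geom_sum_Ico_le_of_lt_one hr0 hr1
      _ = C / (1 - r) := by ring
  linarith

theorem hessian_memory_error_bound_general {d k : ℕ}
    (L M ν μ ρ : ℝ)
    (hM : 0 ≤ M) (hν : 0 < ν) (hμ : 0 < μ)
    (hρ1 : ρ < 1)
    (HF : ℕ → Vec d → (Vec d →L[ℝ] Vec d))
    (hHub : ∀ i x, ‖HF i x‖ ≤ L)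
    (hLipF : ∀ i x y, ‖HF i x - HF i y‖ ≤ M * ‖x - y‖)
    (w : ℕ → Vec d) (wstar : Vec d)
    (klin : ℕ) (hklin : klin ≤ k + 1)
    (hdecay : ∀ i, klin ≤ i → i ≤ k →
      ‖w i - wstar‖ ≤ ν / μ * Real.sqrt ρ ^ (i - klin)) :
    ∑ i ∈ Finset.range (k + 1), ((k : ℝ) + 1)⁻¹ *
        ‖HF i (w i) (w k - wstar) - HF i wstar (w k - wstar)‖ ≤
      (2 * L * klin + ν * M / (μ * (1 - Real.sqrt ρ))) / ((k : ℝ) + 1) * ‖w k - wstar‖ := by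
  have hsqrt : Real.sqrt ρ < 1 := (Real.sqrt_lt' one_pos).2 (by simpa using hρ1)
  have hsum : ∑ i ∈ range (k + 1), ‖HF i (w i) - HF i wstar‖ ≤
      2 * L * klin + ν * M / (μ * (1 - Real.sqrt ρ)) := by
    rw [← div_div]
    refine sum_range_le_of_le_const_of_le_geometric (c := 2 * L) hklin (by positivity)
      (Real.sqrt_nonneg ρ) hsqrt (fun i _ ↦ two_mul L ▸ norm_sub_le_of_le (hHub i _) (hHub i _))
      fun i hi hik ↦ ?_
    calc ‖HF i (w i) - HF i wstar‖ ≤ M * (ν / μ * Real.sqrt ρ ^ (i - klin)) :=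
          (hLipF i _ _).trans (by gcongr; exact hdecay i hi (Nat.lt_succ_iff.1 hik))
      _ = ν * M / μ * Real.sqrt ρ ^ (i - klin) := by ring
  calc ∑ i ∈ range (k + 1), ((k : ℝ) + 1)⁻¹ *
        ‖HF i (w i) (w k - wstar) - HF i wstar (w k - wstar)‖
      ≤ ∑ i ∈ range (k + 1), ((k : ℝ) + 1)⁻¹ * (‖HF i (w i) - HF i wstar‖ * ‖w k - wstar‖) := by
        gcongr with i
        exact (HF i (w i) - HF i wstar).le_opNorm (w k - wstar)
    _ = (∑ i ∈ range (k + 1), ‖HF i (w i) - HF i wstar‖) / ((k : ℝ) + 1) * ‖w k - wstar‖ := by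
        rw [← mul_sum, ← sum_mul]; ring
    _ ≤ _ := by gcongr

/-- Hessian memory-error bound for the uniformly path-averaged
subsampled Hessian once the iterates converge R-linearly after iteration `klin`. -/
theorem hessian_memory_error_bound {d k : ℕ}
    (L M ν μ ρ : ℝ)
    (hL : 0 < L) (hM : 0 ≤ M) (hν : 0 < ν) (hμ : 0 < μ)
    (hρ0 : 0 ≤ ρ) (hρ1 : ρ < 1)
    (F : ℕ → Vec d → ℝ) (gradF : ℕ → Vec d → Vec d)
    (HF : ℕ → Vec d → (Vec d →L[ℝ] Vec d))
    (hFsmooth : ∀ i, ContDiff ℝ 2 (F i))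
    (hgradF : ∀ i x, HasGradientAt (F i) (gradF i x) x)
    (hHF : ∀ i x, HasFDerivAt (gradF i) (HF i x) x)
    (hHub : ∀ i x, ‖HF i x‖ ≤ L)
    (hLipF : ∀ i x y, ‖HF i x - HF i y‖ ≤ M * ‖x - y‖)
    (w : ℕ → Vec d) (wstar : Vec d)
    (klin : ℕ) (hklin : klin ≤ k + 1)
    (hdecay : ∀ i, klin ≤ i → i ≤ k →
      ‖w i - wstar‖ ≤ ν / μ * Real.sqrt ρ ^ (i - klin)) :
    ∑ i ∈ Finset.range (k + 1), ((k : ℝ) + 1)⁻¹ *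
        ‖HF i (w i) (w k - wstar) - HF i wstar (w k - wstar)‖ ≤
      (2 * L * klin + ν * M / (μ * (1 - Real.sqrt ρ))) / ((k : ℝ) + 1) * ‖w k - wstar‖ :=
  hessian_memory_error_bound_general L M ν μ ρ hM hν hμ hρ1 HF hHub hLipF w wstar klin hklin hdecay
end
end

section
/- Fix integers n ≥ 1 and k_lin ≥ 0, and constants μ > 0, λ̂ ≥ 0, M ≥ 0, ν > 0, ρ ∈ [0,1), and 0 < μ̃ ≤ μ/2. Let A₀, A₁, … and B₀, B₁, … be symmetric d×d matrices and w₀, w₁, …, w* ∈ ℝ^d such that: (i) A_i ⪰ −λ̂·I and B_i ⪰ −λ̂·I for all i; (ii) there is a symmetric matrix H* ⪰ μ·I with (1/n)∑_{i=j}^{j+n−1} B_i = H* for every j ≥ 0 (cyclic sampling of a partition); (iii) ‖A_i − B_i‖ ≤ M‖w_i − w*‖ for all i ≥ k_lin, and ∑_{i=k_lin}^∞ ‖w_i − w*‖ ≤ ν/(μ(1 − √ρ)). Then for every k ≥ k_non := max{ 4(1 + λ̂/μ)(k_lin + n − 1), 4Mν/(μ²(1 − √ρ)) } − 1, the average Ĥ_k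 = (1/(k+1))∑_{i=0}^k A_i satisfies Ĥ_k ⪰ (μ/2)·I ⪰ μ̃·I; in particular the positive-definiteness modification of the averaged Hessian is inactive for all such k. -/
open Finset
open scoped RealInnerProductSpace

noncomputable section

/-! Test each averaged Hessian against a vector `v`: the numbers `⟪A i v, v⟫` and `⟪B i v, v⟫`
are bounded below by `-λ̂‖v‖²`, every `n` consecutive `⟪B i v, v⟫` add up to at least `nμ‖v‖²`,
and from index `k_lin` on the `⟪A i v, v⟫` differ from them by a summable amount. Hence
`∑_{i ≤ k} ⟪A i v, v⟫` is at least `(k + 1)μ‖v‖²`, minus `(k_lin + n - 1)(μ + λ̂)‖v‖²` for the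
first `k_lin` terms and the incomplete last block, minus the total perturbation; the choice of
`k_non` makes both losses at most `(k + 1)μ‖v‖²/4`. -/

section BlockSums

variable {a b : ℕ → ℝ} {n : ℕ} {m c : ℝ}

theorem le_sum_Ico_of_le_sum_blocks (hn : 1 ≤ n) (hmc : 0 ≤ m + c) (hb : ∀ i, -c ≤ b i)
    (hblock : ∀ j, n * m ≤ ∑ i ∈ Ico j (j + n), b i) (j L : ℕ) :
    L * m - (n - 1) * (m + c) ≤ ∑ i ∈ Ico j (j + L), b i := by
  induction L using Nat.strong_induction_on generalizing j with
  | _ L ih =>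
    rcases lt_or_ge L n with hL | hL
    · have hLn : (L : ℝ) ≤ n - 1 := by
        rw [le_sub_iff_add_le]; exact_mod_cast hL
      calc L * m - (n - 1) * (m + c) ≤ L * m - L * (m + c) := by gcongr
        _ = #(Ico j (j + L)) • (-c) := by
          simp only [Nat.card_Ico, add_tsub_cancel_left, smul_neg, nsmul_eq_mul]; ring
        _ ≤ ∑ i ∈ Ico j (j + L), b i := card_nsmul_le_sum _ _ _ fun i _ ↦ hb i
    · obtain ⟨L, rfl⟩ := Nat.exists_eq_add_of_le hL
      have hrest := ih L (by omega) (j + n)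
      rw [← add_assoc, ← sum_Ico_consecutive _ (j.le_add_right n) (Nat.le_add_right _ L)]
      push_cast
      linarith [hblock j]

theorem le_sum_range_of_le_sum_blocks (hn : 1 ≤ n) (hmc : 0 ≤ m + c) (ha : ∀ i, -c ≤ a i)
    (hb : ∀ i, -c ≤ b i) (hblock : ∀ j, n * m ≤ ∑ i ∈ Ico j (j + n), b i) {klin K : ℕ} {δ : ℝ}
    (hδ : ∑ i ∈ Ico klin K, (b i - a i) ≤ δ) :
    K * m - (klin + n - 1) * (m + c) - δ ≤ ∑ i ∈ range K, a i := by
  have hhead (K' : ℕ) : K' * -c ≤ ∑ i ∈ range K', a i := by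
    simpa using card_nsmul_le_sum (range K') a (-c) fun i _ ↦ ha i
  rcases le_total klin K with hK | hK
  · obtain ⟨L, rfl⟩ := Nat.exists_eq_add_of_le hK
    have htail := le_sum_Ico_of_le_sum_blocks hn hmc hb hblock klin L
    rw [sum_sub_distrib] at hδ
    rw [range_eq_Ico, ← sum_Ico_consecutive a (Nat.zero_le klin) (Nat.le_add_right _ L),
      ← range_eq_Ico]
    push_cast
    linarith [hhead klin]
  · have hδ0 : 0 ≤ δ := by simpa [Ico_eq_empty_of_le hK] using hδ
    have hKn : (K : ℝ) ≤ klin + n - 1 := by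
      have : (1 : ℝ) ≤ n := by exact_mod_cast hn
      have : (K : ℝ) ≤ klin := by exact_mod_cast hK
      linarith
    nlinarith [hhead K, mul_le_mul_of_nonneg_right hKn hmc]

end BlockSums

section QuadraticForms

variable {E : Type*} [NormedAddCommGroup E] [InnerProductSpace ℝ E]

theorem real_inner_apply_self_le_opNorm_mul_sq (T : E →L[ℝ] E) (v : E) :
    ⟪T v, v⟫ ≤ ‖T‖ * ‖v‖ ^ 2 :=
  calc ⟪T v, v⟫ ≤ ‖T v‖ * ‖v‖ := real_inner_le_norm _ _
    _ ≤ ‖T‖ * ‖v‖ * ‖v‖ := by gcongr; exact T.le_opNorm v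
    _ = ‖T‖ * ‖v‖ ^ 2 := by ring

theorem sum_sub_real_inner_apply_self_le {ι : Type*} (s : Finset ι) (A B : ι → E →L[ℝ] E)
    (v : E) : ∑ i ∈ s, (⟪B i v, v⟫ - ⟪A i v, v⟫) ≤ (∑ i ∈ s, ‖A i - B i‖) * ‖v‖ ^ 2 := by
  rw [sum_mul]
  gcongr with i
  rw [← inner_sub_left, ← sub_apply, ← norm_sub_rev]
  exact real_inner_apply_self_le_opNorm_mul_sq _ v

theorem real_inner_smul_sum_apply_self {ι : Type*} (s : Finset ι) (r : ℝ)
    (A : ι → E →L[ℝ] E) (v : E) :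
    ⟪(r • ∑ i ∈ s, A i) v, v⟫ = r * ∑ i ∈ s, ⟪A i v, v⟫ := by
  rw [smul_apply, real_inner_smul_left, _root_.sum_apply, sum_inner]

end QuadraticForms

theorem add_le_mul_half_of_max_le {μ lam X P K : ℝ} (hμ : 0 < μ)
    (hK : max (4 * (1 + lam / μ) * X) (4 * P / μ) ≤ K) : X * (μ + lam) + P ≤ K * (μ / 2) := by
  obtain ⟨h₁, h₂⟩ := max_le_iff.mp hK
  have e₁ : 4 * (1 + lam / μ) * X * μ = 4 * (X * (μ + lam)) := by field_simp
  have e₂ : 4 * P / μ * μ = 4 * P := by field_simp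
  nlinarith [mul_le_mul_of_nonneg_right h₁ hμ.le, mul_le_mul_of_nonneg_right h₂ hμ.le]

theorem averaged_hessian_eventually_positive_definite_cyclic_general {d : ℕ}
    (n klin : ℕ) (hn : 1 ≤ n)
    (μ lamhat M ν ρ μt : ℝ)
    (hμ : 0 < μ) (hlam : 0 ≤ lamhat) (hM : 0 ≤ M)
    (hμt : μt ≤ μ / 2)
    (A B : ℕ → (Vec d →L[ℝ] Vec d)) (w : ℕ → Vec d) (wstar : Vec d)
    (hAlb : ∀ i (v : Vec d), -lamhat * ‖v‖ ^ 2 ≤ ⟪A i v, v⟫)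
    (hBlb : ∀ i (v : Vec d), -lamhat * ‖v‖ ^ 2 ≤ ⟪B i v, v⟫)
    (Hstar : Vec d →L[ℝ] Vec d)
    (hHlb : ∀ v : Vec d, μ * ‖v‖ ^ 2 ≤ ⟪Hstar v, v⟫)
    (hcyc : ∀ j : ℕ, (n : ℝ)⁻¹ • ∑ i ∈ Finset.Ico j (j + n), B i = Hstar)
    (hAB : ∀ i, klin ≤ i → ‖A i - B i‖ ≤ M * ‖w i - wstar‖)
    (hsum : ∀ K : ℕ, ∑ i ∈ Finset.Ico klin K, ‖w i - wstar‖ ≤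
      ν / (μ * (1 - Real.sqrt ρ)))
    (k : ℕ)
    (hk : max (4 * (1 + lamhat / μ) * ((klin : ℝ) + n - 1))
        (4 * M * ν / (μ ^ 2 * (1 - Real.sqrt ρ))) - 1 ≤ (k : ℝ)) :
    (∀ v : Vec d, μ / 2 * ‖v‖ ^ 2 ≤
      ⟪(((k : ℝ) + 1)⁻¹ • ∑ i ∈ Finset.range (k + 1), A i) v, v⟫) ∧
    (∀ v : Vec d, μt * ‖v‖ ^ 2 ≤
      ⟪(((k : ℝ) + 1)⁻¹ • ∑ i ∈ Finset.range (k + 1), A i) v, v⟫) := by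
  set C := ν / (μ * (1 - Real.sqrt ρ))
  have hbudget : ((klin : ℝ) + n - 1) * (μ + lamhat) + M * C ≤ ((k : ℝ) + 1) * (μ / 2) := by
    refine add_le_mul_half_of_max_le hμ ?_
    have hthreshold : 4 * M * ν / (μ ^ 2 * (1 - √ρ)) = 4 * (M * C) / μ := by
      simp only [C]
      generalize 1 - √ρ = D
      ring
    rw [← hthreshold]
    linarith
  have hpert : ∑ i ∈ Ico klin (k + 1), ‖A i - B i‖ ≤ M * C :=
    calc ∑ i ∈ Ico klin (k + 1), ‖A i - B i‖
        ≤ ∑ i ∈ Ico klin (k + 1), M * ‖w i - wstar‖ :=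
          sum_le_sum fun i hi ↦ hAB i (mem_Ico.mp hi).1
      _ ≤ M * C := by rw [← mul_sum]; exact mul_le_mul_of_nonneg_left (hsum _) hM
  have hmain (v : Vec d) : μ / 2 * ‖v‖ ^ 2 ≤
      ⟪(((k : ℝ) + 1)⁻¹ • ∑ i ∈ Finset.range (k + 1), A i) v, v⟫ := by
    have hblock (j : ℕ) : n * (μ * ‖v‖ ^ 2) ≤ ∑ i ∈ Ico j (j + n), ⟪B i v, v⟫ := by
      rw [← sum_inner, ← _root_.sum_apply, (inv_smul_eq_iff₀ (by positivity)).mp (hcyc j),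
        smul_apply, real_inner_smul_left]
      gcongr
      exact hHlb v
    have hsumA := le_sum_range_of_le_sum_blocks (m := μ * ‖v‖ ^ 2) (c := lamhat * ‖v‖ ^ 2)
      (klin := klin) (K := k + 1) (δ := M * C * ‖v‖ ^ 2) hn (by positivity)
      (by simpa using hAlb · v) (by simpa using hBlb · v) hblock
      ((sum_sub_real_inner_apply_self_le _ A B v).trans (by gcongr))
    rw [real_inner_smul_sum_apply_self, le_inv_mul_iff₀ (by positivity)]
    push_cast at hsumA
    linarith [mul_le_mul_of_nonneg_right hbudget (sq_nonneg ‖v‖)]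
  exact ⟨hmain, fun v ↦ (mul_le_mul_of_nonneg_right hμt (sq_nonneg _)).trans (hmain v)⟩

/-- Under deterministic cyclic sampling, the uniformly averaged Hessians
eventually stay uniformly positive definite, so the positive definiteness modification
becomes inactive. -/
theorem averaged_hessian_eventually_positive_definite_cyclic {d : ℕ}
    (n klin : ℕ) (hn : 1 ≤ n)
    (μ lamhat M ν ρ μt : ℝ)
    (hμ : 0 < μ) (hlam : 0 ≤ lamhat) (hM : 0 ≤ M) (hν : 0 < ν)
    (hρ0 : 0 ≤ ρ) (hρ1 : ρ < 1) (hμt0 : 0 < μt) (hμt : μt ≤ μ / 2)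
    (A B : ℕ → (Vec d →L[ℝ] Vec d)) (w : ℕ → Vec d) (wstar : Vec d)
    (hAsym : ∀ i, IsSelfAdjoint (A i)) (hBsym : ∀ i, IsSelfAdjoint (B i))
    (hAlb : ∀ i (v : Vec d), -lamhat * ‖v‖ ^ 2 ≤ ⟪A i v, v⟫)
    (hBlb : ∀ i (v : Vec d), -lamhat * ‖v‖ ^ 2 ≤ ⟪B i v, v⟫)
    (Hstar : Vec d →L[ℝ] Vec d) (hHsym : IsSelfAdjoint Hstar)
    (hHlb : ∀ v : Vec d, μ * ‖v‖ ^ 2 ≤ ⟪Hstar v, v⟫)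
    (hcyc : ∀ j : ℕ, (n : ℝ)⁻¹ • ∑ i ∈ Finset.Ico j (j + n), B i = Hstar)
    (hAB : ∀ i, klin ≤ i → ‖A i - B i‖ ≤ M * ‖w i - wstar‖)
    (hsum : ∀ K : ℕ, ∑ i ∈ Finset.Ico klin K, ‖w i - wstar‖ ≤
      ν / (μ * (1 - Real.sqrt ρ)))
    (k : ℕ)
    (hk : max (4 * (1 + lamhat / μ) * ((klin : ℝ) + n - 1))
        (4 * M * ν / (μ ^ 2 * (1 - Real.sqrt ρ))) - 1 ≤ (k : ℝ)) :
    (∀ v : Vec d, μ / 2 * ‖v‖ ^ 2 ≤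
      ⟪(((k : ℝ) + 1)⁻¹ • ∑ i ∈ Finset.range (k + 1), A i) v, v⟫) ∧
    (∀ v : Vec d, μt * ‖v‖ ^ 2 ≤
      ⟪(((k : ℝ) + 1)⁻¹ • ∑ i ∈ Finset.range (k + 1), A i) v, v⟫) :=
  averaged_hessian_eventually_positive_definite_cyclic_general n klin hn μ lamhat M ν ρ μt hμ hlam
    hM hμt A B w wstar hAlb hBlb Hstar hHlb hcyc hAB hsum k hk
end
end

section
/- Let N = n·s with n, s ∈ ℕ, and let F₁, …, F_N : ℝ^d → ℝ be twice continuously differentiable with f = (1/N)∑_{i=1}^N F_i. Suppose ‖∇²F_i(w*)‖² ≤ β₁H ‖∇²f(w*)‖² + β₂H for all i (with β₁H, β₂H ≥ 0) and ‖∇²f(w*)‖ ≤ L. Let S₀, S₁, … ⊆ {1,…,N} be sample sets of size s chosen deterministically without replacement in a cyclic fashion (S_i = S_{i mod n} where S₀, …, S_{n−1} partition {1,…,N}), and write ∇²F_S(w) = (1/|S|)∑_{i∈S}∇²F_i(w). Then for every k ≥ 0 and every w_k ∈ ℝ^d: ‖((1/(k+1))∑_{i=0}^k ∇²F_{S_i}(w*)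 − ∇²f(w*))(w_k − w*)‖ ≤ (C_{s,d}/(k+1))·((n−1)²/n)·‖w_k − w*‖, where C_{s,d} = 2√(β₁H L² + β₂H). -/
/-!
Over one full cycle the blocks `S₀, …, S_{n-1}` partition the data, so the `n` block Hessians
`A_i` average exactly to `∇²f(w*)`. Writing `k + 1 = q n + r` with `r < n`, the `q` complete
cycles therefore cancel against `∇²f(w*)`, and only the first `r` blocks of the incomplete cycle
remain: their deviation `∑_{i<r} A_i - (r/n) ∑_{i<n} A_i` has norm at most
`2 r (n - r) / n · B ≤ 2 (n - 1)² / n · B` once every `‖A_i‖` is bounded by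
`B = √(β₁H L² + β₂H)`.
-/

open Finset
open scoped RealInnerProductSpace

noncomputable section

section ScaledSum

variable {E : Type*} [NormedAddCommGroup E] [InnerProductSpace ℝ E] [CompleteSpace E]
  {ι : Type*} [Fintype ι]

theorem HasGradientAt.const_mul_sum {F : ι → E → ℝ} {g : ι → E} {x : E} (c : ℝ)
    (hF : ∀ i, HasGradientAt (F i) (g i) x) :
    HasGradientAt (fun y => c * ∑ i, F i y) (c • ∑ i, g i) x := by
  rw [hasGradientAt_iff_hasFDerivAt, map_smul, map_sum]
  exact (HasFDerivAt.fun_sum fun i _ => (hF i).hasFDerivAt).const_mul c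

theorem hessian_eq_const_smul_sum {F : ι → E → ℝ} {gradF : ι → E → E}
    {HF : ι → E → E →L[ℝ] E} {f : E → ℝ} {gradf : E → E} {H : E →L[ℝ] E} {x : E} (c : ℝ)
    (hf : ∀ y, f y = c * ∑ i, F i y) (hgradF : ∀ i y, HasGradientAt (F i) (gradF i y) y)
    (hHF : ∀ i, HasFDerivAt (gradF i) (HF i x) x) (hgradf : ∀ y, HasGradientAt f (gradf y) y)
    (hH : HasFDerivAt gradf H x) :
    H = c • ∑ i, HF i x := by
  have hgradf_eq : gradf = fun y => c • ∑ i, gradF i y := funext fun y =>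
    (hgradf y).unique (funext hf ▸ HasGradientAt.const_mul_sum c fun i => hgradF i y)
  exact hH.unique (hgradf_eq ▸ (HasFDerivAt.fun_sum fun i _ => hHF i).const_smul c)

end ScaledSum

theorem sum_range_sum_eq_sum_of_partition {ι M : Type*} [Fintype ι] [DecidableEq ι]
    [AddCommMonoid M] {n : ℕ} {S : ℕ → Finset ι}
    (hdisj : ∀ i j, i < j → j < n → Disjoint (S i) (S j))
    (hcover : (range n).biUnion S = univ) (g : ι → M) :
    ∑ i ∈ range n, ∑ j ∈ S i, g j = ∑ j, g j := by
  rw [← hcover, sum_biUnion]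
  intro i hi j hj hij
  rcases hij.lt_or_gt with h | h
  · exact hdisj i j h (mem_range.1 hj)
  · exact (hdisj j i h (mem_range.1 hi)).symm

section Averages

variable {V : Type*} [NormedAddCommGroup V] [NormedSpace ℝ V]

theorem norm_inv_card_smul_sum_le {ι : Type*} {T : Finset ι} (hT : T.Nonempty) {g : ι → V}
    {B : ℝ} (hg : ∀ j ∈ T, ‖g j‖ ≤ B) :
    ‖(#T : ℝ)⁻¹ • ∑ j ∈ T, g j‖ ≤ B := by
  have hsum : ‖∑ j ∈ T, g j‖ ≤ #T * B := by
    simpa using norm_sum_le_of_le T hg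
  rw [norm_smul, norm_inv, Real.norm_natCast]
  exact (inv_mul_le_iff₀ (by exact_mod_cast hT.card_pos)).2 hsum

theorem sum_range_mul_add_of_periodic {M : Type*} [AddCommMonoid M] {A : ℕ → M} {n : ℕ}
    (hA : ∀ i, A i = A (i % n)) (q r : ℕ) :
    ∑ i ∈ range (q * n + r), A i = q • ∑ i ∈ range n, A i + ∑ i ∈ range r, A i := by
  have shift : ∀ m i, A (m * n + i) = A i := fun m i => by
    rw [hA, Nat.mul_comm, Nat.mul_add_mod, ← hA]
  have full : ∀ q, ∑ i ∈ range (q * n), A i = q • ∑ i ∈ range n, A i := by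
    intro q
    induction q with
    | zero => simp
    | succ q ih => rw [Nat.succ_mul, sum_range_add, ih, succ_nsmul]; simp only [shift]
  rw [sum_range_add, full]
  simp only [shift]

theorem norm_sum_range_sub_smul_sum_range_le {A : ℕ → V} {B : ℝ} (hA : ∀ i, ‖A i‖ ≤ B)
    {r n : ℕ} (hrn : r ≤ n) :
    ‖∑ i ∈ range r, A i - ((r : ℝ) / n) • ∑ i ∈ range n, A i‖ ≤ 2 * (r * (n - r)) / n * B := by
  set t : ℝ := r / n
  have ht : 0 ≤ t := by positivity
  have ht1 : t ≤ 1 := div_le_one_of_le₀ (by exact_mod_cast hrn) (Nat.cast_nonneg n)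
  have head : ‖∑ i ∈ range r, A i‖ ≤ r * B := by
    simpa using norm_sum_le_of_le (range r) fun i _ => hA i
  have tail : ‖∑ i ∈ Ico r n, A i‖ ≤ (n - r) * B := by
    simpa [Nat.cast_sub hrn] using norm_sum_le_of_le (Ico r n) fun i _ => hA i
  rw [← sum_range_add_sum_Ico A hrn]
  calc ‖∑ i ∈ range r, A i - t • (∑ i ∈ range r, A i + ∑ i ∈ Ico r n, A i)‖
      = ‖(1 - t) • ∑ i ∈ range r, A i - t • ∑ i ∈ Ico r n, A i‖ := by
        congr 1; module
    _ ≤ (1 - t) * (r * B) + t * ((n - r) * B) := by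
        refine (norm_sub_le _ _).trans ?_
        rw [norm_smul, norm_smul, Real.norm_of_nonneg (sub_nonneg.2 ht1), Real.norm_of_nonneg ht]
        gcongr
    _ = 2 * (r * (n - r)) / n * B := by
        rcases Nat.eq_zero_or_pos n with rfl | hn
        · simp [t, Nat.le_zero.1 hrn]
        · simp only [t]; field_simp; ring

theorem mul_sub_le_sub_one_sq {r n : ℕ} (h : r < n) : (r : ℝ) * (n - r) ≤ ((n : ℝ) - 1) ^ 2 := by
  have hrn : (r : ℝ) + 1 ≤ n := by exact_mod_cast h
  rcases Nat.eq_zero_or_pos r with rfl | hr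
  · simpa using sq_nonneg ((n : ℝ) - 1)
  · have hr1 : (1 : ℝ) ≤ r := by exact_mod_cast hr
    rw [sq]
    exact mul_le_mul (by linarith) (by linarith) (by linarith) (by linarith)

theorem norm_average_sub_cycle_average_le {A : ℕ → V} {n : ℕ} (hn : 0 < n)
    (hper : ∀ i, A i = A (i % n)) {B : ℝ} (hA : ∀ i, ‖A i‖ ≤ B) {m : ℕ} (hm : 0 < m) :
    ‖(m : ℝ)⁻¹ • ∑ i ∈ range m, A i - (n : ℝ)⁻¹ • ∑ i ∈ range n, A i‖ ≤
      2 * B / m * (((n : ℝ) - 1) ^ 2 / n) := by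
  obtain ⟨q, r, hr, rfl⟩ : ∃ q r, r < n ∧ m = q * n + r :=
    ⟨m / n, m % n, Nat.mod_lt m hn, by rw [Nat.mul_comm, Nat.div_add_mod]⟩
  have hB : 0 ≤ B := (norm_nonneg _).trans (hA 0)
  have hmR : (0 : ℝ) < (q * n + r : ℕ) := by exact_mod_cast hm
  have hnR : (0 : ℝ) < n := by exact_mod_cast hn
  have cycles_cancel : (((q * n + r : ℕ) : ℝ)⁻¹ • ∑ i ∈ range (q * n + r), A i -
      (n : ℝ)⁻¹ • ∑ i ∈ range n, A i) = ((q * n + r : ℕ) : ℝ)⁻¹ •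
      (∑ i ∈ range r, A i - ((r : ℝ) / n) • ∑ i ∈ range n, A i) := by
    rw [sum_range_mul_add_of_periodic hper, ← Nat.cast_smul_eq_nsmul ℝ]
    push_cast at hmR ⊢
    match_scalars
    · field_simp; ring
    · field_simp
  rw [cycles_cancel, norm_smul, norm_inv, Real.norm_of_nonneg hmR.le, inv_mul_le_iff₀ hmR]
  calc _ ≤ 2 * (r * (n - r)) / n * B := norm_sum_range_sub_smul_sum_range_le hA hr.le
    _ ≤ 2 * ((n - 1) ^ 2) / n * B := by gcongr; exact mul_sub_le_sub_one_sq hr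
    _ = _ := by field_simp

end Averages

theorem cyclic_sampling_error_at_optimum_general {d N n s : ℕ}
    (hn : 0 < n) (hs : 0 < s) (hns : n * s = N)
    (F : Fin N → Vec d → ℝ) (gradF : Fin N → Vec d → Vec d)
    (HF : Fin N → Vec d → (Vec d →L[ℝ] Vec d))
    (f : Vec d → ℝ) (gradf : Vec d → Vec d) (Hf : Vec d → (Vec d →L[ℝ] Vec d))
    (hf : ∀ x, f x = (N : ℝ)⁻¹ * ∑ i, F i x)
    (hgradF : ∀ i x, HasGradientAt (F i) (gradF i x) x)
    (hHF : ∀ i x, HasFDerivAt (gradF i) (HF i x) x)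
    (hgradf : ∀ x, HasGradientAt f (gradf x) x)
    (hHf : ∀ x, HasFDerivAt gradf (Hf x) x)
    (wstar : Vec d)
    (β₁H β₂H L : ℝ) (hβ₁ : 0 ≤ β₁H)
    (hHvar : ∀ i, ‖HF i wstar‖ ^ 2 ≤ β₁H * ‖Hf wstar‖ ^ 2 + β₂H)
    (hHfL : ‖Hf wstar‖ ≤ L)
    (S : ℕ → Finset (Fin N)) (hScard : ∀ i, (S i).card = s)
    (hScyc : ∀ i, S i = S (i % n))
    (hSdisj : ∀ i j, i < j → j < n → Disjoint (S i) (S j))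
    (hScover : (Finset.range n).biUnion (fun i => S i) = Finset.univ) :
    ∀ (k : ℕ) (wk : Vec d),
      ‖(((k : ℝ) + 1)⁻¹ • ∑ i ∈ Finset.range (k + 1),
            (s : ℝ)⁻¹ • ∑ j ∈ S i, HF j wstar) (wk - wstar)
          - Hf wstar (wk - wstar)‖ ≤
        2 * Real.sqrt (β₁H * L ^ 2 + β₂H) / ((k : ℝ) + 1) *
          (((n : ℝ) - 1) ^ 2 / n) * ‖wk - wstar‖ := by
  intro k wk
  set A : ℕ → (Vec d →L[ℝ] Vec d) := fun i => (s : ℝ)⁻¹ • ∑ j ∈ S i, HF j wstar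
  have hHf_cycle : Hf wstar = (n : ℝ)⁻¹ • ∑ i ∈ range n, A i := by
    have hN : (N : ℝ) = n * s := by exact_mod_cast hns.symm
    rw [hessian_eq_const_smul_sum _ hf hgradF (hHF · wstar) hgradf (hHf wstar), ← smul_sum,
      sum_range_sum_eq_sum_of_partition hSdisj hScover, smul_smul, hN, mul_inv]
  have hHF_le : ∀ j, ‖HF j wstar‖ ≤ √(β₁H * L ^ 2 + β₂H) := fun j =>
    Real.le_sqrt_of_sq_le ((hHvar j).trans (by gcongr))
  have hA_le : ∀ i, ‖A i‖ ≤ √(β₁H * L ^ 2 + β₂H) := fun i => by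
    have h := norm_inv_card_smul_sum_le (card_pos.1 (hScard i ▸ hs)) fun j _ => hHF_le j
    rwa [hScard i] at h
  rw [← sub_apply, hHf_cycle]
  refine (ContinuousLinearMap.le_opNorm _ _).trans (mul_le_mul_of_nonneg_right ?_ (norm_nonneg _))
  have h := norm_average_sub_cycle_average_le hn
    (fun i => congrArg (fun T => (s : ℝ)⁻¹ • ∑ j ∈ T, HF j wstar) (hScyc i)) hA_le k.succ_pos
  rwa [Nat.cast_succ] at h

/-- O(1/k) bound on the sampling error at the optimum of the uniformly
path-averaged subsampled Hessian under deterministic cyclic sampling without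
replacement. -/
theorem cyclic_sampling_error_at_optimum {d N n s : ℕ}
    (hn : 0 < n) (hs : 0 < s) (hns : n * s = N)
    (F : Fin N → Vec d → ℝ) (gradF : Fin N → Vec d → Vec d)
    (HF : Fin N → Vec d → (Vec d →L[ℝ] Vec d))
    (f : Vec d → ℝ) (gradf : Vec d → Vec d) (Hf : Vec d → (Vec d →L[ℝ] Vec d))
    (hf : ∀ x, f x = (N : ℝ)⁻¹ * ∑ i, F i x)
    (hFsmooth : ∀ i, ContDiff ℝ 2 (F i))
    (hgradF : ∀ i x, HasGradientAt (F i) (gradF i x) x)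
    (hHF : ∀ i x, HasFDerivAt (gradF i) (HF i x) x)
    (hgradf : ∀ x, HasGradientAt f (gradf x) x)
    (hHf : ∀ x, HasFDerivAt gradf (Hf x) x)
    (wstar : Vec d)
    (β₁H β₂H L : ℝ) (hβ₁ : 0 ≤ β₁H) (hβ₂ : 0 ≤ β₂H) (hL : 0 < L)
    (hHvar : ∀ i, ‖HF i wstar‖ ^ 2 ≤ β₁H * ‖Hf wstar‖ ^ 2 + β₂H)
    (hHfL : ‖Hf wstar‖ ≤ L)
    (S : ℕ → Finset (Fin N)) (hScard : ∀ i, (S i).card = s)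
    (hScyc : ∀ i, S i = S (i % n))
    (hSdisj : ∀ i j, i < j → j < n → Disjoint (S i) (S j))
    (hScover : (Finset.range n).biUnion (fun i => S i) = Finset.univ) :
    ∀ (k : ℕ) (wk : Vec d),
      ‖(((k : ℝ) + 1)⁻¹ • ∑ i ∈ Finset.range (k + 1),
            (s : ℝ)⁻¹ • ∑ j ∈ S i, HF j wstar) (wk - wstar)
          - Hf wstar (wk - wstar)‖ ≤
        2 * Real.sqrt (β₁H * L ^ 2 + β₂H) / ((k : ℝ) + 1) *
          (((n : ℝ) - 1) ^ 2 / n) * ‖wk - wstar‖ :=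
  cyclic_sampling_error_at_optimum_general hn hs hns F gradF HF f gradf Hf hf hgradF hHF hgradf hHf
    wstar β₁H β₂H L hβ₁ hHvar hHfL S hScard hScyc hSdisj hScover
end
end

section
/- Let (z_k)_{k≥0} be a nonnegative real sequence satisfying z_{k+1} ≤ q z_k² + τ_k z_k + o_k for all k ≥ 0, where q > 0 is a constant, (τ_k) is a nonnegative nonincreasing sequence, and (o_k) is a nonnegative sequence satisfying o_{k+1} = o_k υ t_{k+1}² for a constant υ ∈ (0,1) and a nonnegative nonincreasing sequence (t_k)_{k≥1} with t₁ ≤ 1. Assume z₀ ≤ υ/(3q), τ₀ ≤ υ/3 and o₀ ≤ υ²/(9q), and that r₀ := max{z₀, 3o₀/υ} > 0. Define ρ_k = q r_k + τ_k + (o₀/r₀)∏_{i=0}^{k−1} t_{i+1} and r_{k+1} = max{ r_k ρ_k, r₀ υ^{k+1} ∏_{i=0}^{k} t_{i+1} } (empty products equal 1). Then for all k ≥ 0: z_k ≤ r_k, ρ_k ∈ [0, υ], and r_{k+1}/r_k ≤ υ < 1, so z_k → 0 at an R-linear rate. Moreover, if in addition t_k → 0 and τ_k → 0 as k → ∞,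 then r_{k+1}/r_k → 0, so z_k → 0 at an R-superlinear rate. -/
/-!
Write `P k = ∏_{i<k} t (i+1)` and `ℓ k = r 0 * υ ^ k * P k` for the envelope in the definition
of `r`. Since `o k = o 0 * υ ^ k * P k ^ 2 = (o 0 / r 0) * P k * ℓ k`, an induction shows that
`r k ∈ (0, r 0]`, `ℓ k ≤ r k` and `z k ≤ r k`: the recursion for `z` then gives
`z (k+1) ≤ r k * ρ k`, and each of the three summands of `ρ k` is at most `υ / 3`. Consequently
`r (k+1) ≤ max (ρ k) (υ * t (k+1)) * r k ≤ υ * r k`, and the factor `max (ρ k) (υ * t (k+1))`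
tends to `0` when `t` and `τ` do, because `ρ k → 0` along with `r k`, `τ k` and `P k`.
-/

open Finset Filter Topology

theorem prod_range_mem_Icc {s : ℕ → ℝ} (hs : ∀ k, s k ∈ Set.Icc 0 1) (k : ℕ) :
    ∏ i ∈ range k, s i ∈ Set.Icc 0 1 :=
  ⟨prod_nonneg fun i _ => (hs i).1, prod_le_one (fun i _ => (hs i).1) fun i _ => (hs i).2⟩

theorem tendsto_prod_range_nhds_zero {s : ℕ → ℝ} (hs : ∀ k, s k ∈ Set.Icc 0 1)
    (hs₀ : Tendsto s atTop (𝓝 0)) : Tendsto (fun k => ∏ i ∈ range k, s i) atTop (𝓝 0) := by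
  refine (tendsto_add_atTop_iff_nat 1).mp
    (squeeze_zero (fun k => (prod_range_mem_Icc hs _).1) (fun k => ?_) hs₀)
  rw [prod_range_succ]
  exact mul_le_of_le_one_left (hs k).1 (prod_range_mem_Icc hs k).2

theorem eq_mul_pow_mul_prod_range_sq {o s : ℕ → ℝ} {c : ℝ}
    (h : ∀ k, o (k + 1) = o k * c * s k ^ 2) (k : ℕ) :
    o k = o 0 * c ^ k * (∏ i ∈ range k, s i) ^ 2 := by
  induction k with
  | zero => simp
  | succ k ih => rw [h, ih, prod_range_succ]; ring

theorem max_mul_le_max_mul {r ρ a ℓ : ℝ} (hr : 0 ≤ r) (ha : 0 ≤ a) (hℓ : ℓ ≤ r) :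
    max (r * ρ) (a * ℓ) ≤ max ρ a * r :=
  max_le (by nlinarith [le_max_left ρ a]) (by nlinarith [le_max_right ρ a])

theorem le_mul_add_of_le_quadratic {q τ a o z r z' : ℝ} (hq : 0 ≤ q) (hτ : 0 ≤ τ) (hz : 0 ≤ z)
    (hzr : z ≤ r) (ho : o ≤ a * r) (hz' : z' ≤ q * z ^ 2 + τ * z + o) :
    z' ≤ r * (q * r + τ + a) :=
  calc z' ≤ q * z ^ 2 + τ * z + o := hz'
    _ ≤ q * r ^ 2 + τ * r + a * r := by gcongr
    _ = r * (q * r + τ + a) := by ring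

theorem add_add_mem_Ioc {q r R τ a υ : ℝ} (hq : 0 < q) (hr : 0 < r) (hrR : r ≤ R)
    (hR : q * R ≤ υ / 3) (hτ : τ ∈ Set.Icc 0 (υ / 3)) (ha : a ∈ Set.Icc 0 (υ / 3)) :
    q * r + τ + a ∈ Set.Ioc 0 υ := by
  obtain ⟨hτ₀, hτ₁⟩ := hτ
  obtain ⟨ha₀, ha₁⟩ := ha
  constructor <;> nlinarith

theorem mul_max_le_div_three {q υ z o : ℝ} (hq : 0 < q) (hυ : 0 < υ) (hz : z ≤ υ / (3 * q))
    (ho : o ≤ υ ^ 2 / (9 * q)) : q * max z (3 * o / υ) ≤ υ / 3 := by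
  have ho' : 3 * o / υ ≤ υ / (3 * q) :=
    calc 3 * o / υ ≤ 3 * (υ ^ 2 / (9 * q)) / υ := by gcongr
      _ = υ / (3 * q) := by field_simp; ring
  calc q * max z (3 * o / υ) ≤ q * (υ / (3 * q)) := by gcongr; exact max_le hz ho'
    _ = υ / 3 := by field_simp

theorem div_le_div_three_of_three_mul_div_le {o r υ : ℝ} (hυ : 0 < υ) (hr : 0 < r) (h : 3 * o / υ ≤ r) :
    o / r ≤ υ / 3 := by
  rw [div_le_iff₀ hυ] at h
  rw [div_le_iff₀ hr]
  linarith

/-- The setting of the theorem with the products abstracted: `s k` stands for `t (k+1)`,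
`a k` for `o 0 / r 0 * ∏_{i<k} t (i+1)` and `ℓ k` for `r 0 * υ ^ k * ∏_{i<k} t (i+1)`. -/
structure MajorantRecursion (q υ : ℝ) (z τ o a s ℓ r ρ : ℕ → ℝ) : Prop where
  q_pos : 0 < q
  υ_mem : υ ∈ Set.Icc 0 1
  z_nonneg : ∀ k, 0 ≤ z k
  τ_mem : ∀ k, τ k ∈ Set.Icc 0 (υ / 3)
  a_mem : ∀ k, a k ∈ Set.Icc 0 (υ / 3)
  s_mem : ∀ k, s k ∈ Set.Icc 0 1
  z_succ_le : ∀ k, z (k + 1) ≤ q * z k ^ 2 + τ k * z k + o k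
  o_le : ∀ k, o k ≤ a k * ℓ k
  ℓ_succ : ∀ k, ℓ (k + 1) = υ * s k * ℓ k
  ρ_eq : ∀ k, ρ k = q * r k + τ k + a k
  r_succ : ∀ k, r (k + 1) = max (r k * ρ k) (ℓ (k + 1))
  r_zero_pos : 0 < r 0
  q_mul_r_zero_le : q * r 0 ≤ υ / 3
  ℓ_zero_le : ℓ 0 ≤ r 0
  z_zero_le : z 0 ≤ r 0

namespace MajorantRecursion

variable {q υ : ℝ} {z τ o a s ℓ r ρ : ℕ → ℝ}

theorem ρ_mem_Ioc_of_le (h : MajorantRecursion q υ z τ o a s ℓ r ρ) {k : ℕ} (hr : 0 < r k)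
    (hr₀ : r k ≤ r 0) : ρ k ∈ Set.Ioc 0 υ :=
  h.ρ_eq k ▸ add_add_mem_Ioc h.q_pos hr hr₀ h.q_mul_r_zero_le (h.τ_mem k) (h.a_mem k)

theorem succ_le_max_mul_of_le (h : MajorantRecursion q υ z τ o a s ℓ r ρ) {k : ℕ}
    (hr : 0 ≤ r k) (hℓ : ℓ k ≤ r k) : r (k + 1) ≤ max (ρ k) (υ * s k) * r k := by
  rw [h.r_succ, h.ℓ_succ]
  exact max_mul_le_max_mul hr (mul_nonneg h.υ_mem.1 (h.s_mem k).1) hℓ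

theorem z_succ_le_r_succ_of_le (h : MajorantRecursion q υ z τ o a s ℓ r ρ) {k : ℕ}
    (hz : z k ≤ r k) (hℓ : ℓ k ≤ r k) : z (k + 1) ≤ r (k + 1) := by
  have ho : o k ≤ a k * r k := (h.o_le k).trans (mul_le_mul_of_nonneg_left hℓ (h.a_mem k).1)
  have hz' : z (k + 1) ≤ r k * ρ k := h.ρ_eq k ▸
    le_mul_add_of_le_quadratic h.q_pos.le (h.τ_mem k).1 (h.z_nonneg k) hz ho (h.z_succ_le k)
  exact hz'.trans (h.r_succ k ▸ le_max_left _ _)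

theorem invariant (h : MajorantRecursion q υ z τ o a s ℓ r ρ) (k : ℕ) :
    0 < r k ∧ r k ≤ r 0 ∧ ℓ k ≤ r k ∧ z k ≤ r k := by
  induction k with
  | zero => exact ⟨h.r_zero_pos, le_rfl, h.ℓ_zero_le, h.z_zero_le⟩
  | succ k ih =>
    obtain ⟨hr, hr₀, hℓ, hz⟩ := ih
    have hρ := h.ρ_mem_Ioc_of_le hr hr₀
    have hmax : max (ρ k) (υ * s k) ≤ 1 :=
      max_le (hρ.2.trans h.υ_mem.2) (mul_le_one₀ h.υ_mem.2 (h.s_mem k).1 (h.s_mem k).2)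
    refine ⟨(mul_pos hr hρ.1).trans_le ?_, ?_, ?_, h.z_succ_le_r_succ_of_le hz hℓ⟩
    · exact h.r_succ k ▸ le_max_left _ _
    · calc r (k + 1) ≤ max (ρ k) (υ * s k) * r k := h.succ_le_max_mul_of_le hr.le hℓ
        _ ≤ r k := mul_le_of_le_one_left hr.le hmax
        _ ≤ r 0 := hr₀
    · exact h.r_succ k ▸ le_max_right _ _

theorem ρ_mem_Ioc (h : MajorantRecursion q υ z τ o a s ℓ r ρ) (k : ℕ) : ρ k ∈ Set.Ioc 0 υ :=
  h.ρ_mem_Ioc_of_le (h.invariant k).1 (h.invariant k).2.1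

theorem succ_le_max_mul (h : MajorantRecursion q υ z τ o a s ℓ r ρ) (k : ℕ) :
    r (k + 1) ≤ max (ρ k) (υ * s k) * r k :=
  h.succ_le_max_mul_of_le (h.invariant k).1.le (h.invariant k).2.2.1

theorem succ_le_mul (h : MajorantRecursion q υ z τ o a s ℓ r ρ) (k : ℕ) :
    r (k + 1) ≤ υ * r k :=
  (h.succ_le_max_mul k).trans <| mul_le_mul_of_nonneg_right
    (max_le (h.ρ_mem_Ioc k).2 (mul_le_of_le_one_right h.υ_mem.1 (h.s_mem k).2))
    (h.invariant k).1.le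

theorem tendsto_nhds_zero (h : MajorantRecursion q υ z τ o a s ℓ r ρ) (hυ : υ < 1) :
    Tendsto r atTop (𝓝 0) := by
  refine squeeze_zero (fun k => (h.invariant k).1.le)
    (fun k => le_geom h.υ_mem.1 k fun i _ => h.succ_le_mul i) ?_
  simpa using (tendsto_pow_atTop_nhds_zero_of_lt_one h.υ_mem.1 hυ).mul_const (r 0)

theorem tendsto_succ_div_nhds_zero (h : MajorantRecursion q υ z τ o a s ℓ r ρ) (hυ : υ < 1)
    (hτ : Tendsto τ atTop (𝓝 0)) (ha : Tendsto a atTop (𝓝 0)) (hs : Tendsto s atTop (𝓝 0)) :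
    Tendsto (fun k => r (k + 1) / r k) atTop (𝓝 0) := by
  have hρ : Tendsto ρ atTop (𝓝 0) := by
    simpa [funext h.ρ_eq] using (((h.tendsto_nhds_zero hυ).const_mul q).add hτ).add ha
  have hmax : Tendsto (fun k => max (ρ k) (υ * s k)) atTop (𝓝 0) := by
    simpa using hρ.max (hs.const_mul υ)
  refine squeeze_zero (fun k => div_nonneg (h.invariant (k + 1)).1.le (h.invariant k).1.le)
    (fun k => ?_) hmax
  exact (div_le_iff₀ (h.invariant k).1).2 (h.succ_le_max_mul k)

end MajorantRecursion

/-- Generic linear/superlinear convergence of sequences satisfying a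
relaxed linear-quadratic recursion. -/
theorem generic_linear_superlinear_sequence
    (q υ : ℝ) (hq : 0 < q) (hυ0 : 0 < υ) (hυ1 : υ < 1)
    (z τ o t r ρ : ℕ → ℝ)
    (hz : ∀ k, 0 ≤ z k) (hτ0' : ∀ k, 0 ≤ τ k) (hτmono : ∀ k, τ (k + 1) ≤ τ k)
    (ho' : ∀ k, 0 ≤ o k)
    (ht0' : ∀ k, 1 ≤ k → 0 ≤ t k) (ht1 : t 1 ≤ 1)
    (htmono : ∀ k, 1 ≤ k → t (k + 1) ≤ t k)
    (hrec : ∀ k, z (k + 1) ≤ q * z k ^ 2 + τ k * z k + o k)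
    (horec : ∀ k, o (k + 1) = o k * υ * t (k + 1) ^ 2)
    (hz0 : z 0 ≤ υ / (3 * q)) (hτ0 : τ 0 ≤ υ / 3) (ho0 : o 0 ≤ υ ^ 2 / (9 * q))
    (hr0 : r 0 = max (z 0) (3 * o 0 / υ)) (hr0pos : 0 < r 0)
    (hρ : ∀ k, ρ k = q * r k + τ k + o 0 / r 0 * ∏ i ∈ Finset.range k, t (i + 1))
    (hrrec : ∀ k, r (k + 1) =
      max (r k * ρ k) (r 0 * υ ^ (k + 1) * ∏ i ∈ Finset.range (k + 1), t (i + 1))) :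
    (∀ k, z k ≤ r k) ∧
    (∀ k, ρ k ∈ Set.Icc 0 υ) ∧
    (∀ k, r (k + 1) / r k ≤ υ) ∧
    Tendsto z atTop (nhds 0) ∧
    ((Tendsto t atTop (nhds 0) ∧ Tendsto τ atTop (nhds 0)) →
      Tendsto (fun k => r (k + 1) / r k) atTop (nhds 0)) := by
  have hs : ∀ k, t (k + 1) ∈ Set.Icc 0 1 := fun k =>
    ⟨ht0' _ (Nat.le_add_left 1 k), (antitone_nat_of_succ_le (f := fun i => t (i + 1))
      (fun i => htmono (i + 1) (Nat.le_add_left 1 i)) k.zero_le).trans ht1⟩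
  have hc : o 0 / r 0 ∈ Set.Icc 0 (υ / 3) :=
    ⟨div_nonneg (ho' 0) hr0pos.le, div_le_div_three_of_three_mul_div_le hυ0 hr0pos (hr0 ▸ le_max_right _ _)⟩
  have h : MajorantRecursion q υ z τ o (fun k => o 0 / r 0 * ∏ i ∈ range k, t (i + 1))
      (fun k => t (k + 1)) (fun k => r 0 * υ ^ k * ∏ i ∈ range k, t (i + 1)) r ρ :=
    { q_pos := hq
      υ_mem := ⟨hυ0.le, hυ1.le⟩
      z_nonneg := hz
      τ_mem := fun k => ⟨hτ0' k, (antitone_nat_of_succ_le hτmono k.zero_le).trans hτ0⟩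
      a_mem := fun k => ⟨mul_nonneg hc.1 (prod_range_mem_Icc hs k).1,
        (mul_le_of_le_one_right hc.1 (prod_range_mem_Icc hs k).2).trans hc.2⟩
      s_mem := hs
      z_succ_le := hrec
      o_le := fun k => ((eq_mul_pow_mul_prod_range_sq horec k).trans (by field_simp)).le
      ℓ_succ := fun k => by simp only [prod_range_succ]; ring
      ρ_eq := hρ
      r_succ := hrrec
      r_zero_pos := hr0pos
      q_mul_r_zero_le := hr0 ▸ mul_max_le_div_three hq hυ0 hz0 ho0
      ℓ_zero_le := by simp
      z_zero_le := hr0 ▸ le_max_left _ _ }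
  refine ⟨fun k => (h.invariant k).2.2.2, fun k => Set.Ioc_subset_Icc_self (h.ρ_mem_Ioc k),
    fun k => (div_le_iff₀ (h.invariant k).1).2 (h.succ_le_mul k),
    squeeze_zero hz (fun k => (h.invariant k).2.2.2) (h.tendsto_nhds_zero hυ1), ?_⟩
  rintro ⟨ht, hτ⟩
  have hs' : Tendsto (fun k => t (k + 1)) atTop (𝓝 0) := ht.comp (tendsto_add_atTop_nat 1)
  exact h.tendsto_succ_div_nhds_zero hυ1 hτ
    (by simpa using (tendsto_prod_range_nhds_zero hs hs').const_mul (o 0 / r 0)) hs'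
end

section
/- On a probability space, let f : ℝ^d → ℝ be twice continuously differentiable with μ·I ⪯ ∇²f(w) ⪯ L·I for all w (0 < μ ≤ L) and unique minimizer w*. Let (w_k), (g_k) be ℝ^d-valued random sequences and (H̃_k) random symmetric matrices with μ̃·I ⪯ H̃_k ⪯ L̃·I almost surely (0 < μ̃, L ≤ L̃ < ∞), satisfying w_{k+1} = w_k − α H̃_k⁻¹ g_k with constant deterministic step size 0 < α ≤ μ̃/L, w₀ deterministic, and suppose each g_k satisfies the stochastic norm condition E[ ‖g_k − ∇f(w_k)‖²_{H̃_k⁻¹} | w_k, H̃_k ] ≤ θ̃_g² ‖∇f(w_k)‖²_{H̃_k⁻¹} + ι_k with θ̃_g ∈ [0,1) and ι_k = ι₀ a_g^k (ι₀ > 0, a_g ∈ [0,1)). Then for all k ≥ 0: E[f(w_k) − f(w*)] ≤ C̃₁ ρ̃₁^k, where C̃₁ = max{ f(w₀) − f(w*), L̃ ι₀/(μ(1 − θ̃_g²)) } and ρ̃₁ = max{ 1 − αμ(1 − θ̃_g²)/(2L̃), a_g }. -/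
open Finset Matrix MeasureTheory
open scoped RealInnerProductSpace

noncomputable section

/-!
Since `∇²f ⪯ L·I` and `α L ≤ μ̃`, each step decreases `f` up to noise measured in the
`H̃_k⁻¹`-norm: `f(w_{k+1}) ≤ f(w_k) - α/2 ‖∇f(w_k)‖²_{H̃_k⁻¹} + α/2 ‖g_k - ∇f(w_k)‖²_{H̃_k⁻¹}`.
In expectation the noise condition, through the tower property, bounds the last term by
`θ̃² E‖∇f(w_k)‖²_{H̃_k⁻¹} + ι_k`, and the Polyak–Łojasiewicz inequality with
`‖v‖² ≤ L̃ ‖v‖²_{H̃_k⁻¹}` turns the remaining gradient term into a fraction of the gap.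
For `F_k = E[f(w_k) - f(w*)]` and `δ = αμ(1 - θ̃²)/(2L̃)` this reads
`F_{k+1} ≤ (1 - 2δ) F_k + δ (L̃ ι₀/(μ(1 - θ̃²))) a_g^k`, and since `1 - δ ≤ ρ̃₁` induction
gives `F_k ≤ C̃₁ ρ̃₁^k`.
-/

theorem le_add_deriv_add_of_deriv2_le {φ φ' φ'' : ℝ → ℝ} {K : ℝ}
    (hφ : ∀ t, HasDerivAt φ (φ' t) t) (hφ' : ∀ t, HasDerivAt φ' (φ'' t) t)
    (hK : ∀ t, φ'' t ≤ K) : φ 1 ≤ φ 0 + φ' 0 + K / 2 := by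
  have hslope : Antitone fun t => φ' t - K * t :=
    antitone_of_hasDerivAt_nonpos (f' := fun t => φ'' t - K)
      (fun t => ((hφ' t).sub ((hasDerivAt_id t).const_mul K)).congr_deriv (by simp))
      fun t => sub_nonpos.mpr (hK t)
  have hgap : ∀ t, HasDerivAt (fun t => φ t - φ' 0 * t - K * (t ^ 2 / 2))
      (φ' t - φ' 0 - K * t) t := fun t =>
    (((hφ t).sub ((hasDerivAt_id t).const_mul (φ' 0))).sub
      (((hasDerivAt_pow 2 t).div_const 2).const_mul K)).congr_deriv (by simp)
  have hmono := antitoneOn_of_hasDerivWithinAt_nonpos (convex_Ici 0)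
    (HasDerivAt.continuousOn fun t _ => hgap t)
    (fun t _ => (hgap t).hasDerivWithinAt)
    (fun t ht => by linarith [hslope (interior_subset ht : (0 : ℝ) ≤ t)])
    Set.self_mem_Ici (Set.mem_Ici.mpr zero_le_one) zero_le_one
  simp only at hmono
  linarith

section SecondOrder

variable {E : Type*} [NormedAddCommGroup E] [InnerProductSpace ℝ E]
  {f : E → ℝ} {gradf : E → E} {Hf : E → E →L[ℝ] E}

theorem hasDerivAt_const_add_smul (x v : E) (t : ℝ) :
    HasDerivAt (fun t : ℝ => x + t • v) v t := by
  simpa using ((hasDerivAt_id t).smul_const v).const_add x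

theorem hasDerivAt_comp_add_smul [CompleteSpace E] (hgrad : ∀ x, HasGradientAt f (gradf x) x)
    (x v : E) (t : ℝ) :
    HasDerivAt (fun t : ℝ => f (x + t • v)) ⟪gradf (x + t • v), v⟫ t := by
  simpa [Function.comp_def] using
    (hgrad _).hasFDerivAt.comp_hasDerivAt t (hasDerivAt_const_add_smul x v t)

theorem hasDerivAt_inner_comp_add_smul (hHf : ∀ x, HasFDerivAt gradf (Hf x) x)
    (x v : E) (t : ℝ) :
    HasDerivAt (fun t : ℝ => ⟪gradf (x + t • v), v⟫) ⟪Hf (x + t • v) v, v⟫ t := by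
  simpa using ((hHf _).comp_hasDerivAt t (hasDerivAt_const_add_smul x v t)).inner ℝ
    (hasDerivAt_const t v)

variable [CompleteSpace E]

theorem le_add_inner_add_of_hessian_le (hgrad : ∀ x, HasGradientAt f (gradf x) x)
    (hHf : ∀ x, HasFDerivAt gradf (Hf x) x) {c : ℝ} (hc : ∀ z v, ⟪Hf z v, v⟫ ≤ c * ‖v‖ ^ 2)
    (x y : E) : f y ≤ f x + ⟪gradf x, y - x⟫ + c / 2 * ‖y - x‖ ^ 2 := by
  have := le_add_deriv_add_of_deriv2_le (hasDerivAt_comp_add_smul hgrad x (y - x))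
    (hasDerivAt_inner_comp_add_smul hHf x (y - x)) fun t => hc _ _
  simpa only [one_smul, add_sub_cancel, zero_smul, add_zero, mul_div_right_comm] using this

theorem add_inner_add_le_of_le_hessian (hgrad : ∀ x, HasGradientAt f (gradf x) x)
    (hHf : ∀ x, HasFDerivAt gradf (Hf x) x) {c : ℝ} (hc : ∀ z v, c * ‖v‖ ^ 2 ≤ ⟪Hf z v, v⟫)
    (x y : E) : f x + ⟪gradf x, y - x⟫ + c / 2 * ‖y - x‖ ^ 2 ≤ f y := by
  have := le_add_deriv_add_of_deriv2_le
    (fun t => (hasDerivAt_comp_add_smul hgrad x (y - x) t).neg)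
    (fun t => (hasDerivAt_inner_comp_add_smul hHf x (y - x) t).neg) fun t => neg_le_neg (hc _ _)
  simp only [Pi.neg_apply, one_smul, add_sub_cancel, zero_smul, add_zero] at this
  linarith

theorem mul_sub_le_norm_gradient_sq (hgrad : ∀ x, HasGradientAt f (gradf x) x)
    (hHf : ∀ x, HasFDerivAt gradf (Hf x) x) {μ : ℝ} (hμ : 0 ≤ μ)
    (hHlb : ∀ z v, μ * ‖v‖ ^ 2 ≤ ⟪Hf z v, v⟫) (x w : E) :
    2 * μ * (f x - f w) ≤ ‖gradf x‖ ^ 2 := by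
  have hlow := add_inner_add_le_of_le_hessian hgrad hHf hHlb x w
  have hsq : 0 ≤ ‖gradf x + μ • (w - x)‖ ^ 2 := sq_nonneg _
  rw [norm_add_sq_real, real_inner_smul_right, norm_smul, Real.norm_of_nonneg hμ] at hsq
  nlinarith [mul_le_mul_of_nonneg_left hlow (by positivity : 0 ≤ 2 * μ)]

theorem norm_gradient_sq_le (hgrad : ∀ x, HasGradientAt f (gradf x) x)
    (hHf : ∀ x, HasFDerivAt gradf (Hf x) x) {L : ℝ} (hL : 0 < L)
    (hHub : ∀ z v, ⟪Hf z v, v⟫ ≤ L * ‖v‖ ^ 2) {wstar : E} (hmin : ∀ x, f wstar ≤ f x) (x : E) :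
    ‖gradf x‖ ^ 2 ≤ 2 * L * (f x - f wstar) := by
  have hstep := le_add_inner_add_of_hessian_le hgrad hHf hHub x (x - L⁻¹ • gradf x)
  rw [sub_sub_cancel_left, inner_neg_right, real_inner_smul_right, real_inner_self_eq_norm_sq,
    norm_neg, norm_smul, Real.norm_of_nonneg (inv_nonneg.mpr hL.le)] at hstep
  have hsq : L / 2 * (L⁻¹ * ‖gradf x‖) ^ 2 = L⁻¹ * ‖gradf x‖ ^ 2 / 2 := by field_simp
  calc ‖gradf x‖ ^ 2 = 2 * L * (L⁻¹ * ‖gradf x‖ ^ 2 / 2) := by field_simp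
    _ ≤ 2 * L * (f x - f wstar) := by
      gcongr
      linarith [hmin (x - L⁻¹ • gradf x)]

end SecondOrder

section InverseQuadraticForm

variable {E : Type*} [NormedAddCommGroup E] [InnerProductSpace ℝ E] {T S : E →L[ℝ] E}

theorem ContinuousLinearMap.IsPositive.inner_apply_sq_le (hT : T.IsPositive) (x y : E) :
    ⟪T x, y⟫ ^ 2 ≤ ⟪T x, x⟫ * ⟪T y, y⟫ := by
  have hquad : ∀ t : ℝ, 0 ≤ ⟪T y, y⟫ * (t * t) + 2 * ⟪T x, y⟫ * t + ⟪T x, x⟫ := fun t => by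
    have hexp : ⟪T (x + t • y), x + t • y⟫ =
        ⟪T y, y⟫ * (t * t) + 2 * ⟪T x, y⟫ * t + ⟪T x, x⟫ := by
      simp only [map_add, map_smul, inner_add_left, inner_add_right, real_inner_smul_left,
        real_inner_smul_right]
      rw [hT.inner_left_eq_inner_right y x, real_inner_comm (T x) y]
      ring
    exact hexp ▸ hT.inner_nonneg_left _
  have := discrim_le_zero hquad
  rw [discrim] at this
  nlinarith

theorem ContinuousLinearMap.IsPositive.norm_apply_sq_le (hT : T.IsPositive) {M : ℝ}
    (hub : ∀ v, ⟪T v, v⟫ ≤ M * ‖v‖ ^ 2) (z : E) : ‖T z‖ ^ 2 ≤ M * ⟪T z, z⟫ := by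
  rcases eq_or_ne (T z) 0 with h0 | h0
  · simp [h0]
  have hcs := hT.inner_apply_sq_le z (T z)
  rw [real_inner_self_eq_norm_sq] at hcs
  have hpos : 0 < ‖T z‖ ^ 2 := by positivity
  nlinarith [mul_le_mul_of_nonneg_left (hub (T z)) (hT.inner_nonneg_left z)]

variable {m M : ℝ}

theorem mul_norm_sq_le_inner_of_rightInverse (hTS : Function.RightInverse S T)
    (hlb : ∀ v, m * ‖v‖ ^ 2 ≤ ⟪T v, v⟫) (u : E) : m * ‖S u‖ ^ 2 ≤ ⟪S u, u⟫ := by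
  simpa [hTS u, real_inner_comm] using hlb (S u)

theorem mul_inner_le_norm_sq_of_rightInverse (hTS : Function.RightInverse S T) (hm : 0 ≤ m)
    (hlb : ∀ v, m * ‖v‖ ^ 2 ≤ ⟪T v, v⟫) (u : E) :
    m * ⟪S u, u⟫ ≤ ‖u‖ ^ 2 := by
  have hlow := mul_norm_sq_le_inner_of_rightInverse hTS hlb u
  have hcs := real_inner_le_norm (S u) u
  nlinarith [norm_nonneg (S u), norm_nonneg u, sq_nonneg (m * ‖S u‖ - ‖u‖)]

theorem norm_sq_le_mul_inner_of_rightInverse (hTS : Function.RightInverse S T)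
    (hT : T.IsPositive) (hub : ∀ v, ⟪T v, v⟫ ≤ M * ‖v‖ ^ 2) (u : E) : ‖u‖ ^ 2 ≤ M * ⟪S u, u⟫ := by
  simpa [hTS u, real_inner_comm] using hT.norm_apply_sq_le hub (S u)

theorem inner_map_sub_sub {A : E →L[ℝ] E} (hA : (A : E →ₗ[ℝ] E).IsSymmetric) (g v : E) :
    ⟪A (g - v), g - v⟫ = ⟪A g, g⟫ - 2 * ⟪A g, v⟫ + ⟪A v, v⟫ := by
  simp only [map_sub, inner_sub_left, inner_sub_right]
  rw [hA.apply_clm v g, real_inner_comm v (A g)]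
  ring

theorem apply_sub_smul_le_of_hessian_le [CompleteSpace E] {f : E → ℝ} {gradf : E → E}
    {Hf : E → E →L[ℝ] E} (hgrad : ∀ x, HasGradientAt f (gradf x) x)
    (hHf : ∀ x, HasFDerivAt gradf (Hf x) x) {L : ℝ} (hHub : ∀ z v, ⟪Hf z v, v⟫ ≤ L * ‖v‖ ^ 2)
    {A : E →L[ℝ] E} (hA : (A : E →ₗ[ℝ] E).IsSymmetric) {α : ℝ} (hα : 0 ≤ α)
    (hαA : ∀ u, α * L * ‖A u‖ ^ 2 ≤ ⟪A u, u⟫) (w g : E) :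
    f (w - α • A g) ≤
      f w - α / 2 * ⟪A (gradf w), gradf w⟫ + α / 2 * ⟪A (g - gradf w), g - gradf w⟫ := by
  have hstep := le_add_inner_add_of_hessian_le hgrad hHf hHub w (w - α • A g)
  rw [sub_sub_cancel_left, inner_neg_right, real_inner_smul_right, norm_neg, norm_smul,
    Real.norm_of_nonneg hα, real_inner_comm] at hstep
  have hquad : L / 2 * (α * ‖A g‖) ^ 2 ≤ α / 2 * ⟪A g, g⟫ := by
    nlinarith [mul_le_mul_of_nonneg_left (hαA g) hα]
  rw [inner_map_sub_sub hA]
  linarith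

end InverseQuadraticForm

section LoewnerBounds

variable {d : ℕ} {m M : ℝ} {H : Matrix (Fin d) (Fin d) ℝ}

/-- `m • I ⪯ H ⪯ M • I` in the Loewner order, for a symmetric matrix `H`. -/
def IsLoewnerBounded (m M : ℝ) (H : Matrix (Fin d) (Fin d) ℝ) : Prop :=
  H.IsSymm ∧ (∀ v : Vec d, m * ‖v‖ ^ 2 ≤ ⟪toOp H v, v⟫) ∧
    (∀ v : Vec d, ⟪toOp H v, v⟫ ≤ M * ‖v‖ ^ 2)

theorem toOp_mul (A B : Matrix (Fin d) (Fin d) ℝ) (x : Vec d) :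
    toOp (A * B) x = toOp A (toOp B x) := by
  simp [toOp, Matrix.toLpLin_apply, Matrix.mulVec_mulVec]

theorem isSymmetric_toOp_s14 (hH : H.IsSymm) : (toOp H : Vec d →ₗ[ℝ] Vec d).IsSymmetric :=
  Matrix.isSymmetric_toEuclideanLin_iff.mpr (Matrix.isHermitian_iff_isSymm.mpr hH)

theorem isUnit_det_of_coercive (hm : 0 < m) (hlb : ∀ v : Vec d, m * ‖v‖ ^ 2 ≤ ⟪toOp H v, v⟫) :
    IsUnit H.det := by
  refine isUnit_iff_ne_zero.mpr fun hdet => ?_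
  obtain ⟨v, hv0, hv⟩ := Matrix.exists_mulVec_eq_zero_iff.mpr hdet
  have hker : toOp H (WithLp.toLp 2 v) = 0 := by simp [toOp, Matrix.toLpLin_apply, hv]
  have hnorm : 0 < ‖WithLp.toLp 2 v‖ := by simpa using hv0
  have := hlb (WithLp.toLp 2 v)
  rw [hker, inner_zero_left] at this
  nlinarith [mul_pos hm (pow_pos hnorm 2)]

theorem rightInverse_toOp_inv (h : IsUnit H.det) :
    Function.RightInverse (toOp H⁻¹) (toOp H) := fun x => by
  rw [← toOp_mul, Matrix.mul_nonsing_inv _ h]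
  simp [toOp]

theorem IsLoewnerBounded.isPositive (hH : IsLoewnerBounded m M H) (hm : 0 ≤ m) :
    (toOp H).IsPositive :=
  (toOp H).isPositive_iff.mpr
    ⟨isSymmetric_toOp_s14 hH.1, fun v => (mul_nonneg hm (sq_nonneg ‖v‖)).trans (hH.2.1 v)⟩

theorem IsLoewnerBounded.le [Nontrivial (Vec d)] (hH : IsLoewnerBounded m M H) : m ≤ M := by
  obtain ⟨v, hv⟩ := exists_norm_eq (Vec d) zero_le_one
  simpa [hv] using (hH.2.1 v).trans (hH.2.2 v)

/-- The squared weighted norm `‖u‖²_{H⁻¹}`. -/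
def sqNormInv (H : Matrix (Fin d) (Fin d) ℝ) (u : Vec d) : ℝ :=
  ⟪toOp H⁻¹ u, u⟫

theorem IsLoewnerBounded.rightInverse (hH : IsLoewnerBounded m M H) (hm : 0 < m) :
    Function.RightInverse (toOp H⁻¹) (toOp H) :=
  rightInverse_toOp_inv (isUnit_det_of_coercive hm hH.2.1)

theorem IsLoewnerBounded.mul_norm_sq_le_sqNormInv (hH : IsLoewnerBounded m M H) (hm : 0 < m)
    (u : Vec d) : m * ‖toOp H⁻¹ u‖ ^ 2 ≤ sqNormInv H u :=
  mul_norm_sq_le_inner_of_rightInverse (hH.rightInverse hm) hH.2.1 u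

theorem IsLoewnerBounded.sqNormInv_nonneg (hH : IsLoewnerBounded m M H) (hm : 0 < m)
    (u : Vec d) : 0 ≤ sqNormInv H u :=
  (by positivity : 0 ≤ m * ‖toOp H⁻¹ u‖ ^ 2).trans (hH.mul_norm_sq_le_sqNormInv hm u)

theorem IsLoewnerBounded.mul_sqNormInv_le (hH : IsLoewnerBounded m M H) (hm : 0 < m)
    (u : Vec d) : m * sqNormInv H u ≤ ‖u‖ ^ 2 :=
  mul_inner_le_norm_sq_of_rightInverse (hH.rightInverse hm) hm.le hH.2.1 u

theorem IsLoewnerBounded.norm_sq_le_mul_sqNormInv (hH : IsLoewnerBounded m M H) (hm : 0 < m)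
    (u : Vec d) : ‖u‖ ^ 2 ≤ M * sqNormInv H u :=
  norm_sq_le_mul_inner_of_rightInverse (hH.rightInverse hm) (hH.isPositive hm.le) hH.2.2 u

theorem IsLoewnerBounded.apply_sub_smul_le {f : Vec d → ℝ} {gradf : Vec d → Vec d}
    {Hf : Vec d → Vec d →L[ℝ] Vec d} (hgrad : ∀ x, HasGradientAt f (gradf x) x)
    (hHf : ∀ x, HasFDerivAt gradf (Hf x) x) {L : ℝ} (hHub : ∀ z v, ⟪Hf z v, v⟫ ≤ L * ‖v‖ ^ 2)
    (hH : IsLoewnerBounded m M H) (hm : 0 < m) {α : ℝ} (hα : 0 ≤ α) (hαL : α * L ≤ m)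
    (w g : Vec d) :
    f (w - α • toOp H⁻¹ g) ≤
      f w - α / 2 * sqNormInv H (gradf w) + α / 2 * sqNormInv H (g - gradf w) :=
  apply_sub_smul_le_of_hessian_le hgrad hHf hHub (isSymmetric_toOp_s14 hH.1.inv) hα
    (fun u => (mul_le_mul_of_nonneg_right hαL (sq_nonneg _)).trans
      (hH.mul_norm_sq_le_sqNormInv hm u)) w g

end LoewnerBounds

section Measurability

variable {d : ℕ} {Ω : Type*} [MeasurableSpace Ω] {H : Ω → Matrix (Fin d) (Fin d) ℝ}

theorem continuous_inner_toOp_apply :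
    Continuous fun p : (Fin d → Fin d → ℝ) × Vec d => ⟪toOp (Matrix.of p.1) p.2, p.2⟫ := by
  simp only [toOp, LinearMap.coe_toContinuousLinearMap', Matrix.toLpLin_apply]
  fun_prop

theorem Measurable.matrix_inv (hH : Measurable fun ω => Matrix.of.symm (H ω)) :
    Measurable fun ω => Matrix.of.symm (H ω)⁻¹ := by
  have hdet : Continuous fun M : Fin d → Fin d → ℝ => (Matrix.of M).det :=
    continuous_id.matrix_det
  have hadj : Continuous fun M : Fin d → Fin d → ℝ => Matrix.of.symm (Matrix.of M).adjugate :=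
    continuous_id.matrix_adjugate
  simp_rw [Matrix.inv_def, Ring.inverse_eq_inv']
  exact continuous_smul.measurable2 (hdet.measurable.comp hH).inv (hadj.measurable.comp hH)

theorem measurable_sqNormInv (hH : Measurable fun ω => Matrix.of.symm (H ω)) {u : Ω → Vec d}
    (hu : Measurable u) :
    Measurable fun ω => sqNormInv (H ω) (u ω) :=
  continuous_inner_toOp_apply.measurable2
    (c := fun (M : Fin d → Fin d → ℝ) (v : Vec d) => ⟪toOp (Matrix.of M) v, v⟫)
    hH.matrix_inv hu

end Measurability

section Expectation

variable {d : ℕ} {Ω : Type*} [m0 : MeasurableSpace Ω] {μP : Measure Ω}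
  {f : Vec d → ℝ} {gradf : Vec d → Vec d} {Hf : Vec d → Vec d →L[ℝ] Vec d}
  {L μ μt Lt : ℝ} {wstar : Vec d} {w : Ω → Vec d} {H : Ω → Matrix (Fin d) (Fin d) ℝ}

theorem integral_le_of_condExp_le [IsFiniteMeasure μP] {m : MeasurableSpace Ω} (hm : m ≤ m0)
    {X Y : Ω → ℝ} (hY : Integrable Y μP) (hXY : μP[X | m] ≤ᵐ[μP] Y) :
    ∫ ω, X ω ∂μP ≤ ∫ ω, Y ω ∂μP := by
  rw [← integral_condExp hm]
  exact integral_mono_ae integrable_condExp hY hXY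

theorem integrable_sqNormInv_gradient [IsFiniteMeasure μP]
    (hgrad : ∀ x, HasGradientAt f (gradf x) x) (hHf : ∀ x, HasFDerivAt gradf (Hf x) x)
    (hL : 0 < L) (hHub : ∀ z v, ⟪Hf z v, v⟫ ≤ L * ‖v‖ ^ 2) (hmin : ∀ x, f wstar ≤ f x)
    (hμt : 0 < μt) (hw : Measurable w) (hHmeas : Measurable fun ω => Matrix.of.symm (H ω))
    (hHspec : ∀ᵐ ω ∂μP, IsLoewnerBounded μt Lt (H ω))
    (hfint : Integrable (fun ω => f (w ω)) μP) :
    Integrable (fun ω => sqNormInv (H ω) (gradf (w ω))) μP := by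
  have hgradc : Continuous gradf := continuous_iff_continuousAt.2 fun x => (hHf x).continuousAt
  have hFint : Integrable (fun ω => f (w ω) - f wstar) μP := hfint.sub (integrable_const _)
  refine (hFint.const_mul (2 * L / μt)).mono'
    (measurable_sqNormInv hHmeas (hgradc.measurable.comp hw)).aestronglyMeasurable ?_
  filter_upwards [hHspec] with ω hH
  rw [Real.norm_of_nonneg (hH.sqNormInv_nonneg hμt _), div_mul_eq_mul_div, le_div_iff₀ hμt]
  linarith [hH.mul_sqNormInv_le hμt (gradf (w ω)),
    norm_gradient_sq_le hgrad hHf hL hHub hmin (w ω)]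

theorem integral_sub_le_of_preconditioned_step [IsProbabilityMeasure μP]
    (hgrad : ∀ x, HasGradientAt f (gradf x) x) (hHf : ∀ x, HasFDerivAt gradf (Hf x) x)
    (hL : 0 < L) (hμ : 0 ≤ μ) (hμt : 0 < μt) (hLt : 0 < Lt)
    (hHub : ∀ z v, ⟪Hf z v, v⟫ ≤ L * ‖v‖ ^ 2) (hHlb : ∀ z v, μ * ‖v‖ ^ 2 ≤ ⟪Hf z v, v⟫)
    (hmin : ∀ x, f wstar ≤ f x) {w' g : Ω → Vec d} {α θ ι : ℝ}
    (hw : Measurable w) (hHmeas : Measurable fun ω => Matrix.of.symm (H ω))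
    (hHspec : ∀ᵐ ω ∂μP, IsLoewnerBounded μt Lt (H ω))
    (hα : 0 ≤ α) (hαL : α * L ≤ μt) (hθ : θ ^ 2 ≤ 1)
    (hstep : ∀ ω, w' ω = w ω - α • toOp (H ω)⁻¹ (g ω))
    (hfint : Integrable (fun ω => f (w ω)) μP) (hfint' : Integrable (fun ω => f (w' ω)) μP)
    (heint : Integrable (fun ω => sqNormInv (H ω) (g ω - gradf (w ω))) μP)
    (hnoise : μP[fun ω => sqNormInv (H ω) (g ω - gradf (w ω)) |
        MeasurableSpace.comap (fun ω => (w ω, Matrix.of.symm (H ω))) inferInstance]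
      ≤ᵐ[μP] fun ω => θ ^ 2 * sqNormInv (H ω) (gradf (w ω)) + ι) :
    ∫ ω, (f (w' ω) - f wstar) ∂μP ≤
      (1 - α * μ * (1 - θ ^ 2) / Lt) * ∫ ω, (f (w ω) - f wstar) ∂μP + α / 2 * ι := by
  have hFint : Integrable (fun ω => f (w ω) - f wstar) μP := hfint.sub (integrable_const _)
  have hqint := integrable_sqNormInv_gradient hgrad hHf hL hHub hmin hμt hw hHmeas hHspec hfint
  have hdescent : ∀ᵐ ω ∂μP, f (w' ω) - f wstar ≤ (f (w ω) - f wstar) -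
      α / 2 * sqNormInv (H ω) (gradf (w ω)) + α / 2 * sqNormInv (H ω) (g ω - gradf (w ω)) := by
    filter_upwards [hHspec] with ω hH
    have := hH.apply_sub_smul_le hgrad hHf hHub hμt hα hαL (w ω) (g ω)
    rw [hstep]
    linarith
  have hPL : ∀ᵐ ω ∂μP, 2 * μ * (f (w ω) - f wstar) ≤ Lt * sqNormInv (H ω) (gradf (w ω)) := by
    filter_upwards [hHspec] with ω hH
    exact (mul_sub_le_norm_gradient_sq hgrad hHf hμ hHlb _ _).trans
      (hH.norm_sq_le_mul_sqNormInv hμt _)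
  have hnoise_int := integral_le_of_condExp_le (hw.prodMk hHmeas).comap_le
    (Y := fun ω => θ ^ 2 * sqNormInv (H ω) (gradf (w ω)) + ι)
    ((hqint.const_mul _).add (integrable_const ι)) hnoise
  rw [integral_add (hqint.const_mul _) (integrable_const ι), integral_const_mul,
    integral_const, probReal_univ, one_smul] at hnoise_int
  have hdescent_int : ∫ ω, (f (w' ω) - f wstar) ∂μP ≤ ∫ ω, (f (w ω) - f wstar) ∂μP -
      α / 2 * ∫ ω, sqNormInv (H ω) (gradf (w ω)) ∂μP +
      α / 2 * ∫ ω, sqNormInv (H ω) (g ω - gradf (w ω)) ∂μP := by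
    have hgap_int : Integrable
        (fun ω => f (w ω) - f wstar - α / 2 * sqNormInv (H ω) (gradf (w ω))) μP :=
      hFint.sub (hqint.const_mul _)
    have : ∫ ω, (f (w' ω) - f wstar) ∂μP ≤ ∫ ω, (f (w ω) - f wstar -
        α / 2 * sqNormInv (H ω) (gradf (w ω)) + α / 2 * sqNormInv (H ω) (g ω - gradf (w ω))) ∂μP :=
      integral_mono_ae (hfint'.sub (integrable_const _)) (hgap_int.add (heint.const_mul _))
        hdescent
    rwa [integral_add hgap_int (heint.const_mul _), integral_sub hFint (hqint.const_mul _),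
      integral_const_mul, integral_const_mul] at this
  have hPL_int : 2 * μ * ∫ ω, (f (w ω) - f wstar) ∂μP ≤
      Lt * ∫ ω, sqNormInv (H ω) (gradf (w ω)) ∂μP := by
    rw [← integral_const_mul, ← integral_const_mul]
    exact integral_mono_ae (hFint.const_mul _) (hqint.const_mul _) hPL
  have hcontract : α * μ * (1 - θ ^ 2) / Lt * ∫ ω, (f (w ω) - f wstar) ∂μP ≤
      α / 2 * (1 - θ ^ 2) * ∫ ω, sqNormInv (H ω) (gradf (w ω)) ∂μP := by
    rw [div_mul_eq_mul_div, div_le_iff₀ hLt]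
    nlinarith [mul_le_mul_of_nonneg_left hPL_int
      (by nlinarith : 0 ≤ α / 2 * (1 - θ ^ 2))]
  nlinarith

end Expectation

theorem le_max_mul_pow_of_le_contraction {F : ℕ → ℝ} {B δ a ρ : ℝ} (hF0 : 0 ≤ F 0)
    (hδ : 0 ≤ δ) (h2δ : 2 * δ ≤ 1) (ha : 0 ≤ a) (haρ : a ≤ ρ) (hδρ : 1 - δ ≤ ρ)
    (hrec : ∀ n, F (n + 1) ≤ (1 - 2 * δ) * F n + δ * B * a ^ n) (n : ℕ) :
    F n ≤ max (F 0) B * ρ ^ n := by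
  set C := max (F 0) B
  have hC : 0 ≤ C := hF0.trans (le_max_left _ _)
  have hρ : 0 ≤ ρ := ha.trans haρ
  induction n with
  | zero => simp [C]
  | succ n ih =>
    calc F (n + 1) ≤ (1 - 2 * δ) * F n + δ * B * a ^ n := hrec n
      _ ≤ (1 - 2 * δ) * (C * ρ ^ n) + δ * C * ρ ^ n := by
        gcongr
        exact le_max_right _ _
      _ = (1 - δ) * (C * ρ ^ n) := by ring
      _ ≤ ρ * (C * ρ ^ n) := by gcongr
      _ = C * ρ ^ (n + 1) := by ring

theorem global_linear_convergence_in_expectation_general {d : ℕ}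
    {Ω : Type*} [m0 : MeasurableSpace Ω] (μP : Measure Ω) [IsProbabilityMeasure μP]
    (L μ μt Lt α θg a_g ι₀ : ℝ)
    (hL : 0 < L) (hμ : 0 < μ) (hμL : μ ≤ L) (hμt : 0 < μt) (hLt : L ≤ Lt)
    (f : Vec d → ℝ) (gradf : Vec d → Vec d) (Hf : Vec d → (Vec d →L[ℝ] Vec d))
    (hgrad : ∀ x, HasGradientAt f (gradf x) x)
    (hHf : ∀ x, HasFDerivAt gradf (Hf x) x)
    (hHub : ∀ x (v : Vec d), ⟪Hf x v, v⟫ ≤ L * ‖v‖ ^ 2)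
    (hHlb : ∀ x (v : Vec d), μ * ‖v‖ ^ 2 ≤ ⟪Hf x v, v⟫)
    (wstar : Vec d) (hmin : ∀ x, f wstar ≤ f x)
    (w g : ℕ → Ω → Vec d) (Ht : ℕ → Ω → Matrix (Fin d) (Fin d) ℝ)
    (hwmeas : ∀ k, Measurable (w k))
    (hHtmeas : ∀ k, Measurable fun ω => Matrix.of.symm (Ht k ω))
    (hHtspec : ∀ k, ∀ᵐ ω ∂μP, (Ht k ω).IsSymm ∧
      (∀ v : Vec d, μt * ‖v‖ ^ 2 ≤ ⟪toOp (Ht k ω) v, v⟫) ∧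
      (∀ v : Vec d, ⟪toOp (Ht k ω) v, v⟫ ≤ Lt * ‖v‖ ^ 2))
    (w0 : Vec d) (hw0 : ∀ ω, w 0 ω = w0)
    (hα0 : 0 < α) (hα : α ≤ μt / L)
    (hiter : ∀ k ω, w (k + 1) ω = w k ω - α • toOp (Ht k ω)⁻¹ (g k ω))
    (hθg : θg ∈ Set.Ico (0 : ℝ) 1) (hag : a_g ∈ Set.Ico (0 : ℝ) 1)
    (hfint : ∀ k, Integrable (fun ω => f (w k ω)) μP)
    (hqint : ∀ k, Integrable (fun ω =>
      ⟪toOp (Ht k ω)⁻¹ (g k ω - gradf (w k ω)), g k ω - gradf (w k ω)⟫) μP)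
    (hnorm : ∀ k,
      μP[(fun ω => ⟪toOp (Ht k ω)⁻¹ (g k ω - gradf (w k ω)),
            g k ω - gradf (w k ω)⟫) |
          MeasurableSpace.comap (fun ω => (w k ω, Matrix.of.symm (Ht k ω)))
            inferInstance]
        ≤ᵐ[μP] fun ω =>
          θg ^ 2 * ⟪toOp (Ht k ω)⁻¹ (gradf (w k ω)), gradf (w k ω)⟫ + ι₀ * a_g ^ k) :
    ∀ k, ∫ ω, (f (w k ω) - f wstar) ∂μP ≤
      max (f w0 - f wstar) (Lt * ι₀ / (μ * (1 - θg ^ 2))) *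
        (max (1 - α * μ * (1 - θg ^ 2) / (2 * Lt)) a_g) ^ k := by
  obtain ⟨hθ0, hθ1⟩ := hθg
  have hLt0 : 0 < Lt := hL.trans_le hLt
  have hθ : 0 < 1 - θg ^ 2 := by nlinarith
  have hF0 : ∫ ω, (f (w 0 ω) - f wstar) ∂μP = f w0 - f wstar := by simp [hw0]
  intro k
  -- `μ̃ ≤ L̃`, hence `2δ ≤ 1`, can only be read off `hHtspec` in positive dimension.
  rcases subsingleton_or_nontrivial (Vec d) with hd | hd
  · simp only [Subsingleton.elim _ wstar, sub_self, integral_zero]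
    exact mul_nonneg (le_max_left _ _) (pow_nonneg (le_max_of_le_right hag.1) k)
  obtain ⟨ω₀, hH₀⟩ := (hHtspec 0).exists
  have hαL : α * L ≤ μt := (le_div_iff₀ hL).mp hα
  have h2δ : 2 * (α * μ * (1 - θg ^ 2) / (2 * Lt)) ≤ 1 := by
    rw [mul_div_assoc', div_le_one (by positivity)]
    nlinarith [mul_le_mul_of_nonneg_left hμL hα0.le, IsLoewnerBounded.le hH₀]
  rw [← hF0]
  refine le_max_mul_pow_of_le_contraction (F := fun n => ∫ ω, (f (w n ω) - f wstar) ∂μP)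
    (hF0 ▸ sub_nonneg.mpr (hmin w0)) (by positivity) h2δ hag.1 (le_max_right _ _)
    (le_max_left _ _) (fun n => ?_) k
  refine (integral_sub_le_of_preconditioned_step hgrad hHf hL hμ.le hμt hLt0 hHub hHlb hmin
    (hwmeas n) (hHtmeas n) (hHtspec n) hα0.le hαL (by linarith) (hiter n) (hfint n)
    (hfint (n + 1)) (hqint n) (hnorm n)).trans_eq ?_
  field_simp

/-- Global linear convergence in expectation under the stochastic
norm condition with `A_k = H̃_k⁻¹`, for strongly convex objectives. -/
theorem global_linear_convergence_in_expectation {d : ℕ}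
    {Ω : Type*} [m0 : MeasurableSpace Ω] (μP : Measure Ω) [IsProbabilityMeasure μP]
    (L μ μt Lt α θg a_g ι₀ : ℝ)
    (hL : 0 < L) (hμ : 0 < μ) (hμL : μ ≤ L) (hμt : 0 < μt) (hLt : L ≤ Lt)
    (f : Vec d → ℝ) (gradf : Vec d → Vec d) (Hf : Vec d → (Vec d →L[ℝ] Vec d))
    (hsmooth : ContDiff ℝ 2 f)
    (hgrad : ∀ x, HasGradientAt f (gradf x) x)
    (hHf : ∀ x, HasFDerivAt gradf (Hf x) x)
    (hHub : ∀ x (v : Vec d), ⟪Hf x v, v⟫ ≤ L * ‖v‖ ^ 2)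
    (hHlb : ∀ x (v : Vec d), μ * ‖v‖ ^ 2 ≤ ⟪Hf x v, v⟫)
    (wstar : Vec d) (hmin : ∀ x, f wstar ≤ f x)
    (huniq : ∀ x, (∀ y, f x ≤ f y) → x = wstar)
    (w g : ℕ → Ω → Vec d) (Ht : ℕ → Ω → Matrix (Fin d) (Fin d) ℝ)
    (hwmeas : ∀ k, Measurable (w k)) (hgmeas : ∀ k, Measurable (g k))
    (hHtmeas : ∀ k, Measurable fun ω => Matrix.of.symm (Ht k ω))
    (hHtspec : ∀ k, ∀ᵐ ω ∂μP, (Ht k ω).IsSymm ∧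
      (∀ v : Vec d, μt * ‖v‖ ^ 2 ≤ ⟪toOp (Ht k ω) v, v⟫) ∧
      (∀ v : Vec d, ⟪toOp (Ht k ω) v, v⟫ ≤ Lt * ‖v‖ ^ 2))
    (w0 : Vec d) (hw0 : ∀ ω, w 0 ω = w0)
    (hα0 : 0 < α) (hα : α ≤ μt / L)
    (hiter : ∀ k ω, w (k + 1) ω = w k ω - α • toOp (Ht k ω)⁻¹ (g k ω))
    (hθg : θg ∈ Set.Ico (0 : ℝ) 1) (hι₀ : 0 < ι₀) (hag : a_g ∈ Set.Ico (0 : ℝ) 1)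
    (hfint : ∀ k, Integrable (fun ω => f (w k ω)) μP)
    (hqint : ∀ k, Integrable (fun ω =>
      ⟪toOp (Ht k ω)⁻¹ (g k ω - gradf (w k ω)), g k ω - gradf (w k ω)⟫) μP)
    (hnorm : ∀ k,
      μP[(fun ω => ⟪toOp (Ht k ω)⁻¹ (g k ω - gradf (w k ω)),
            g k ω - gradf (w k ω)⟫) |
          MeasurableSpace.comap (fun ω => (w k ω, Matrix.of.symm (Ht k ω)))
            inferInstance]
        ≤ᵐ[μP] fun ω =>
          θg ^ 2 * ⟪toOp (Ht k ω)⁻¹ (gradf (w k ω)), gradf (w k ω)⟫ + ι₀ * a_g ^ k) :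
    ∀ k, ∫ ω, (f (w k ω) - f wstar) ∂μP ≤
      max (f w0 - f wstar) (Lt * ι₀ / (μ * (1 - θg ^ 2))) *
        (max (1 - α * μ * (1 - θg ^ 2) / (2 * Lt)) a_g) ^ k :=
  global_linear_convergence_in_expectation_general (m0 := m0) μP L μ μt Lt α θg a_g ι₀ hL hμ hμL hμt
    hLt f gradf Hf hgrad hHf hHub hHlb wstar hmin w g Ht hwmeas hHtmeas hHtspec w0 hw0 hα0 hα hiter
    hθg hag hfint hqint hnorm
end
end
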